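/- arXiv:1910.05667 — 9 statements merged into one kernel-verified Lean document; each statement's English description precedes it below -/
import Mathlib

section
/- Let k ≥ 1 be an integer and let α_1, …, α_k be positive real numbers with α_1 + ⋯ + α_k = 2π. Set θ_0 = 0 and θ_i = α_1 + ⋯ + α_i, let R_i = {r·(cos θ_i, sin θ_i) : r ≥ 0} for 0 ≤ i ≤ k be the crease rays, and let S_i = {r·(cos t, sin t) : r ≥ 0, θ_{i−1} ≤ t ≤ θ_i} for 1 ≤ i ≤ k be the closed sectors. Then there exists a function f : ℝ² → ℝ² that is continuous, whose restriction to each sector S_i preserves Euclidean distances, and which is non-differentiable at every point of R_i \ {(0,0)} for each 1 ≤ i ≤ k, if and only if k is even and α_1 − α_2 + α_3 − ⋯ − α_k = 0. -/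
open Real

/-- The cumulative angle `θ i = α 1 + ⋯ + α i` (0-indexed: sum of `α 0, …, α (i-1)`). -/
noncomputable def cumAngle (α : ℕ → ℝ) (i : ℕ) : ℝ := ∑ j ∈ Finset.range i, α j

/-- The unit vector in the plane at angle `t`. -/
noncomputable def dirVec (t : ℝ) : EuclideanSpace ℝ (Fin 2) :=
  (WithLp.equiv 2 (Fin 2 → ℝ)).symm ![Real.cos t, Real.sin t]

/-- The `i`-th crease ray `R i = {r • (cos θ_i, sin θ_i) : r ≥ 0}`. -/
noncomputable def creaseRay (α : ℕ → ℝ) (i : ℕ) : Set (EuclideanSpace ℝ (Fin 2)) :=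
  {p | ∃ r : ℝ, 0 ≤ r ∧ p = r • dirVec (cumAngle α i)}

/-- The `i`-th closed sector `S i = {r • (cos t, sin t) : r ≥ 0, θ_{i-1} ≤ t ≤ θ_i}`. -/
noncomputable def sector (α : ℕ → ℝ) (i : ℕ) : Set (EuclideanSpace ℝ (Fin 2)) :=
  {p | ∃ r t : ℝ, 0 ≤ r ∧ cumAngle α (i - 1) ≤ t ∧ t ≤ cumAngle α i ∧ p = r • dirVec t}

/-!
A flat origami is an isometry on each sector, hence affine there: on the `i`-th sector it is
`z ↦ F 0 + Lᵢ z` for a linear isometry `Lᵢ` (a point of the plane is determined by its distances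
to three non-collinear points of the sector). Consecutive `Lᵢ` agree on the crease between them,
and they cannot be equal because the map is not differentiable there, so `Lᵢ₊₁ = Lᵢ ∘ σᵢ` with
`σᵢ` the reflection in the `i`-th crease line. Going once around the vertex gives
`σ₁ ∘ ⋯ ∘ σₖ = id`. A composition of `k` line reflections is orientation reversing for odd `k`,
and for even `k` it is the rotation by `2(θ₁ - θ₂ + ⋯ - θₖ) = α₁ - α₂ + ⋯ - αₖ - 2π`; since the
alternating sum lies strictly between `-2π` and `2π`, it is the identity exactly when the
alternating sum vanishes. Conversely, if `σ₁ ∘ ⋯ ∘ σₖ = id`, the maps `σ₁ ∘ ⋯ ∘ σᵢ₋₁` on the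
sectors glue to a flat origami.
-/

open Complex ComplexConjugate Filter Set Topology

section General

variable {E : Type*} [NormedAddCommGroup E] [NormedSpace ℝ E]

theorem ContinuousLinearMap.eq_of_apply_eq_of_apply_I_mul_eq {A B : ℂ →L[ℝ] E} {x : ℂ}
    (hx : x ≠ 0) (h₁ : A x = B x) (h₂ : A (I * x) = B (I * x)) : A = B := by
  ext z
  have hz : z = (z / x).re • x + (z / x).im • (I * x) := by
    conv_lhs => rw [← div_mul_cancel₀ z hx, ← re_add_im (z / x)]
    simp only [real_smul]; ring
  rw [hz, map_add, map_add, map_smul, map_smul, map_smul, map_smul, h₁, h₂]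

theorem HasFDerivAt.apply_eq_of_eventually_eq_add {G : Type*} [NormedAddCommGroup G]
    [NormedSpace ℝ G] {F : G → E} {L A : G →L[ℝ] E} {x v : G} {c : E} {s : Set ℝ}
    (hF : HasFDerivAt F L x) (hs : UniqueDiffWithinAt ℝ s 0) (hx : F x = c + A x)
    (h : ∀ᶠ t in 𝓝[s] 0, F (x + t • v) = c + A (x + t • v)) : L v = A v := by
  have hγ : HasDerivAt (fun t : ℝ => x + t • v) v 0 := by
    simpa using ((hasDerivAt_id (0 : ℝ)).smul_const v).const_add x
  have hL : HasDerivAt (fun t : ℝ => F (x + t • v)) (L v) 0 :=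
    (show HasFDerivAt F L (x + (0 : ℝ) • v) by simpa using hF).comp_hasDerivAt (0 : ℝ) hγ
  have hA : HasDerivWithinAt (fun t : ℝ => F (x + t • v)) (A v) s 0 := by
    have := (((hasDerivAt_id (0 : ℝ)).smul_const (A v)).const_add (F x)).hasDerivWithinAt (s := s)
    refine (show HasDerivWithinAt (fun t : ℝ => F x + t • A v) (A v) s 0 by
      simpa using this).congr_of_eventuallyEq ?_ (by simp)
    filter_upwards [h] with t ht
    rw [ht, hx, map_add, map_smul, add_assoc]
  exact hs.eq_deriv _ hL.hasDerivWithinAt hA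

theorem differentiableAt_iff_eq_of_eqOn_sides {F : ℂ → E} {x : ℂ} (hx : x ≠ 0) {s t : Set ℂ}
    (hst : ∀ᶠ z in 𝓝 x, (arg (z / x) ≤ 0 → z ∈ s) ∧ (0 ≤ arg (z / x) → z ∈ t))
    {c : E} {A B : ℂ →L[ℝ] E} (hA : ∀ z ∈ s, F z = c + A z) (hB : ∀ z ∈ t, F z = c + B z) :
    DifferentiableAt ℝ F x ↔ A = B := by
  constructor
  · intro hF
    have hxst := hst.self_of_nhds
    simp only [div_self hx, arg_one, le_refl, forall_const] at hxst
    have hdiv : ∀ h : ℝ, (x + h • (I * x)) / x = 1 + h * I := fun h => by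
      rw [real_smul]; field_simp
    have hev := ((by fun_prop : Continuous fun h : ℝ => x + h • (I * x)).tendsto' 0 x
      (by simp)).eventually hst
    have hAv := hF.hasFDerivAt.apply_eq_of_eventually_eq_add (uniqueDiffWithinAt_Iio 0)
      (hA x hxst.1) <| by
        filter_upwards [self_mem_nhdsWithin, nhdsWithin_le_nhds hev] with h (hh : h < 0) hz
        exact hA _ (hz.1 (by rw [hdiv]; exact (arg_neg_iff.2 (by simpa using hh)).le))
    have hBv := hF.hasFDerivAt.apply_eq_of_eventually_eq_add (uniqueDiffWithinAt_Ioi 0)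
      (hB x hxst.2) <| by
        filter_upwards [self_mem_nhdsWithin, nhdsWithin_le_nhds hev] with h (hh : 0 < h) hz
        exact hB _ (hz.2 (by rw [hdiv]; exact arg_nonneg_iff.2 (by simpa using hh.le)))
    refine ContinuousLinearMap.eq_of_apply_eq_of_apply_I_mul_eq hx ?_ (hAv.symm.trans hBv)
    simpa [hA x hxst.1] using hB x hxst.2
  · rintro rfl
    have : F =ᶠ[𝓝 x] fun z => c + A z := hst.mono fun z hz =>
      (le_total (arg (z / x)) 0).elim (fun h => hA z (hz.1 h)) (fun h => hB z (hz.2 h))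
    exact ((differentiableAt_const c).add A.differentiableAt).congr_of_eventuallyEq this

end General

theorem exists_continuous_forall_mem_eq {X Y ι : Type*} [TopologicalSpace X] [TopologicalSpace Y]
    [Finite ι] {S : ι → Set X} {g : ι → X → Y} (hS : ∀ i, IsClosed (S i))
    (hcov : ∀ x, ∃ i, x ∈ S i) (hg : ∀ i, Continuous (g i))
    (hagree : ∀ i j x, x ∈ S i → x ∈ S j → g i x = g j x) :
    ∃ F : X → Y, Continuous F ∧ ∀ i, ∀ x ∈ S i, F x = g i x := by
  choose idx hidx using hcov
  have hF : ∀ i, ∀ x ∈ S i, g (idx x) x = g i x := fun i x hx => hagree _ _ x (hidx x) hx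
  exact ⟨fun x => g (idx x) x, (locallyFinite_of_finite S).continuous
    (iUnion_eq_univ_iff.2 fun x => ⟨_, hidx x⟩) hS fun i => (hg i).continuousOn.congr (hF i), hF⟩

namespace Kawasaki

/-- The reflection in the line `ℝ • exp (θ * I)`. -/
noncomputable def lineReflection (θ : ℝ) : ℂ ≃ₗᵢ[ℝ] ℂ :=
  conjLIE.trans (rotation (Circle.exp (2 * θ)))

@[simp] theorem lineReflection_apply (θ : ℝ) (z : ℂ) :
    lineReflection θ z = cexp (↑(2 * θ) * I) * conj z := rfl

theorem exp_mul_I_mul_conj (θ : ℝ) : cexp (θ * I) * conj (cexp (θ * I)) = 1 := by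
  rw [← exp_conj, ← Complex.exp_add]; simp [conj_ofReal]

theorem exp_two_mul_mul_I (θ : ℝ) : cexp (↑(2 * θ) * I) = cexp (θ * I) * cexp (θ * I) := by
  rw [← Complex.exp_add]; push_cast; ring_nf

theorem lineReflection_apply_ofReal_mul (θ r : ℝ) :
    lineReflection θ (r * cexp (θ * I)) = r * cexp (θ * I) := by
  rw [lineReflection_apply, map_mul, conj_ofReal, exp_two_mul_mul_I]
  linear_combination (r * cexp (θ * I)) * exp_mul_I_mul_conj θ

theorem lineReflection_ne_refl (θ : ℝ) : lineReflection θ ≠ LinearIsometryEquiv.refl ℝ ℂ := by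
  intro h
  have h' := congrArg (· (cexp (θ * I) * I)) h
  simp only [LinearIsometryEquiv.coe_refl, id, lineReflection_apply, map_mul, conj_I,
    exp_two_mul_mul_I] at h'
  have h2 : 2 * (cexp (θ * I) * I) = 0 := by
    linear_combination -h' - (cexp (θ * I) * I) * exp_mul_I_mul_conj θ
  simp [Complex.exp_ne_zero] at h2

theorem eq_or_eq_lineReflection_of_norm_eq {θ : ℝ} {w z : ℂ} (h₀ : ‖w‖ = ‖z‖)
    (h₁ : ‖w - cexp (θ * I)‖ = ‖z - cexp (θ * I)‖) : w = z ∨ w = lineReflection θ z := by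
  set u := cexp (θ * I)
  have hu : u * conj u = 1 := exp_mul_I_mul_conj θ
  have hre : (w * conj u).re = (z * conj u).re := by
    have e₀ := congrArg (· ^ 2) h₀
    have e₁ := congrArg (· ^ 2) h₁
    simp only [← normSq_eq_norm_sq, normSq_apply, mul_re, conj_re, conj_im, sub_re,
      sub_im] at e₀ e₁ ⊢
    linarith
  have him : (w * conj u).im ^ 2 = (z * conj u).im ^ 2 := by
    have e : ‖w * conj u‖ ^ 2 = ‖z * conj u‖ ^ 2 := by simp [h₀]
    simp only [← normSq_eq_norm_sq, normSq_apply, hre] at e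
    linarith
  have hcancel : ∀ v, v * conj u * u = v := fun v => by linear_combination v * hu
  rcases sq_eq_sq_iff_eq_or_eq_neg.1 him with h | h
  · left
    rw [← hcancel w, ← hcancel z, Complex.ext hre h]
  · right
    have hconj : w * conj u = conj (z * conj u) :=
      Complex.ext (by simpa using hre) (by simp only [mul_im, conj_re, conj_im] at h ⊢; linarith)
    rw [lineReflection_apply, exp_two_mul_mul_I, ← hcancel w, hconj, map_mul, conj_conj]
    ring

theorem eq_of_norm_sub_eq_of_norm_sub_eq {a b : ℝ} (hab : cexp (↑(2 * a) * I) ≠ cexp (↑(2 * b) * I))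
    {w z : ℂ} (h₀ : ‖w‖ = ‖z‖) (ha : ‖w - cexp (a * I)‖ = ‖z - cexp (a * I)‖)
    (hb : ‖w - cexp (b * I)‖ = ‖z - cexp (b * I)‖) : w = z := by
  obtain h | ha' := eq_or_eq_lineReflection_of_norm_eq h₀ ha
  · exact h
  obtain h | hb' := eq_or_eq_lineReflection_of_norm_eq h₀ hb
  · exact h
  have hz : z = 0 := by
    by_contra hz
    have h' := ha'.symm.trans hb'
    simp only [lineReflection_apply] at h'
    exact hab (mul_right_cancel₀ ((map_ne_zero _).2 hz) h')
  simp [ha', hz]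

theorem eq_or_eq_lineReflection_trans_of_apply_eq {L L' : ℂ ≃ₗᵢ[ℝ] ℂ} {θ : ℝ}
    (h : L' (cexp (θ * I)) = L (cexp (θ * I))) : L' = L ∨ L' = (lineReflection θ).trans L := by
  set M := L'.trans L.symm
  have hM : M (cexp (θ * I)) = cexp (θ * I) := by simp [M, h]
  suffices M = LinearIsometryEquiv.refl ℝ ℂ ∨ M = lineReflection θ by
    refine this.imp (fun h' => ?_) (fun h' => ?_) <;> ext z <;>
      simpa [M] using congrArg L (LinearIsometryEquiv.congr_fun h' z)
  obtain ⟨a, ha | ha⟩ := linear_isometry_complex M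
  · left
    rw [ha, rotation_apply] at hM
    have : a = 1 := Circle.coe_eq_one.1 (by simpa using hM)
    rw [ha, this, map_one]
    rfl
  · right
    rw [ha, LinearIsometryEquiv.trans_apply, rotation_apply, conjLIE_apply] at hM
    have : (a : ℂ) = cexp (↑(2 * θ) * I) := by
      rw [exp_two_mul_mul_I]
      linear_combination cexp (θ * I) * hM - a * exp_mul_I_mul_conj θ
    ext z
    rw [ha, LinearIsometryEquiv.trans_apply, rotation_apply, conjLIE_apply, this]
    rfl

theorem exists_linearIsometryEquiv_eqOn {S : Set ℂ} {F : ℂ → ℂ} {a b : ℝ} (h0 : 0 ∈ S)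
    (ha : cexp (a * I) ∈ S) (hb : cexp (b * I) ∈ S)
    (hab : cexp (↑(2 * a) * I) ≠ cexp (↑(2 * b) * I))
    (hF : ∀ x ∈ S, ∀ y ∈ S, dist (F x) (F y) = dist x y) :
    ∃ L : ℂ ≃ₗᵢ[ℝ] ℂ, ∀ z ∈ S, F z = F 0 + L z := by
  set G := fun z => F z - F 0
  have hG : ∀ x ∈ S, ∀ y ∈ S, ‖G x - G y‖ = ‖x - y‖ := fun x hx y hy => by
    simpa [G, dist_eq_norm] using hF x hx y hy
  have hG₀ : ∀ x ∈ S, ‖G x‖ = ‖x‖ := fun x hx => by simpa [G] using hG x hx 0 h0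
  have hsymm : ∀ (M : ℂ ≃ₗᵢ[ℝ] ℂ) {x y}, x ∈ S → y ∈ S → M y = G y →
      ‖M.symm (G x) - y‖ = ‖x - y‖ := fun M x y hx hy hMy => by
    rw [← hG x hx y hy, ← M.norm_map, map_sub, M.apply_symm_apply, hMy]
  obtain ⟨L, hLa, hLb⟩ : ∃ L : ℂ ≃ₗᵢ[ℝ] ℂ,
      L (cexp (a * I)) = G (cexp (a * I)) ∧ L (cexp (b * I)) = G (cexp (b * I)) := by
    let ρ : Circle := ⟨G (cexp (a * I)), by simp [Submonoid.unitSphere, hG₀ _ ha]⟩ / Circle.exp a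
    have hρ : rotation ρ (cexp (a * I)) = G (cexp (a * I)) := by
      change G (cexp (a * I)) / cexp (a * I) * cexp (a * I) = _
      exact div_mul_cancel₀ _ (Complex.exp_ne_zero _)
    obtain h | h := eq_or_eq_lineReflection_of_norm_eq (θ := a) (w := (rotation ρ).symm _)
      (by simp [hG₀ _ hb]) (hsymm _ hb ha hρ)
    · exact ⟨rotation ρ, hρ, by simpa using (congrArg (rotation ρ) h).symm⟩
    · refine ⟨(lineReflection a).trans (rotation ρ), ?_,
        by simpa using (congrArg (rotation ρ) h).symm⟩
      simpa [← hρ] using lineReflection_apply_ofReal_mul a 1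
  refine ⟨L, fun z hz => ?_⟩
  have hz : L.symm (G z) = z := eq_of_norm_sub_eq_of_norm_sub_eq hab (by simp [hG₀ z hz])
    (hsymm L hz ha hLa) (hsymm L hz hb hLb)
  have : G z = L z := by simpa using congrArg L hz
  simp only [G] at this
  rw [← this, add_sub_cancel]

theorem exp_two_mul_mul_I_ne {a b : ℝ} (h₀ : a < b) (h₁ : b < a + π) :
    cexp (↑(2 * a) * I) ≠ cexp (↑(2 * b) * I) := fun h => by
  have := Circle.exp_injOn_Icc (by linarith) (left_mem_Icc.2 (by linarith : 2 * a ≤ 2 * b))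
    (right_mem_Icc.2 (by linarith : 2 * a ≤ 2 * b))
    (Circle.coe_injective (by simpa only [Circle.coe_exp]))
  linarith

theorem eq_or_eq_zero_and_eq_two_pi_of_exp_eq {t t' : ℝ} (h₀ : 0 ≤ t) (h₁ : t ≤ t')
    (h₂ : t' ≤ 2 * π) (h : cexp (t * I) = cexp (t' * I)) : t = t' ∨ t = 0 ∧ t' = 2 * π := by
  obtain ⟨m, hm⟩ := Circle.exp_eq_exp.1 (Circle.coe_injective (by simpa only [Circle.coe_exp]))
  have hm₁ : m ≤ 0 := by exact_mod_cast (show (m : ℝ) ≤ 0 by nlinarith [pi_pos])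
  have hm₂ : -1 ≤ m := by exact_mod_cast (show (-1 : ℝ) ≤ m by nlinarith [pi_pos])
  obtain rfl | rfl : m = 0 ∨ m = -1 := by omega
  · left; simpa using hm
  · right; push_cast at hm; constructor <;> linarith

section Angles

variable {α : ℕ → ℝ} {k : ℕ}

theorem cumAngle_zero (α : ℕ → ℝ) : cumAngle α 0 = 0 := Finset.sum_range_zero _

theorem cumAngle_succ (α : ℕ → ℝ) (n : ℕ) : cumAngle α (n + 1) = cumAngle α n + α n :=
  Finset.sum_range_succ _ _

theorem strictMonoOn_cumAngle (hpos : ∀ i < k, 0 < α i) : StrictMonoOn (cumAngle α) (Iic k) :=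
  strictMonoOn_Iic_of_lt_succ fun m hm => by
    rw [Order.succ_eq_add_one, cumAngle_succ]; linarith [hpos m hm]

theorem abs_alternatingSum_lt (hk : 2 ≤ k) (hpos : ∀ i < k, 0 < α i) :
    |∑ j ∈ Finset.range k, (-1 : ℝ) ^ j * α j| < ∑ j ∈ Finset.range k, α j := by
  have key : ∀ s : ℝ, s = 1 ∨ s = -1 → ∀ j₀ < k, s * (-1) ^ j₀ = 1 →
      0 < ∑ j ∈ Finset.range k, (1 + s * (-1) ^ j) * α j := by
    intro s hs j₀ hj₀ hsj₀
    refine Finset.sum_pos' (fun j hj => mul_nonneg ?_ (hpos j (Finset.mem_range.1 hj)).le)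
      ⟨j₀, Finset.mem_range.2 hj₀, ?_⟩
    · rcases hs with rfl | rfl <;> rcases neg_one_pow_eq_or ℝ j with h | h <;> simp [h]
    · rw [hsj₀]; linarith [hpos j₀ hj₀]
  have h₀ := key 1 (by norm_num) 0 (by omega) (by norm_num)
  have h₁ := key (-1) (by norm_num) 1 (by omega) (by norm_num)
  simp only [add_mul, one_mul, Finset.sum_add_distrib, mul_assoc, ← Finset.mul_sum] at h₀ h₁
  rw [abs_lt]; constructor <;> linarith

end Angles

/-- `foldIsometry α n = σ₁ ∘ ⋯ ∘ σₙ`, where `σᵢ` is the reflection in the `i`-th crease line. -/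
noncomputable def foldIsometry (α : ℕ → ℝ) : ℕ → ℂ ≃ₗᵢ[ℝ] ℂ
  | 0 => LinearIsometryEquiv.refl ℝ ℂ
  | n + 1 => (lineReflection (cumAngle α (n + 1))).trans (foldIsometry α n)

theorem foldIsometry_apply (α : ℕ → ℝ) (n : ℕ) (z : ℂ) :
    foldIsometry α n z =
      cexp (↑(∑ j ∈ Finset.range n, (-1 : ℝ) ^ j * α j - (-1) ^ n * cumAngle α n) * I) *
        if Even n then z else conj z := by
  induction n generalizing z with
  | zero => simp [foldIsometry, cumAngle_zero]
  | succ n ih =>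
    rw [foldIsometry, LinearIsometryEquiv.trans_apply, ih, lineReflection_apply,
      Finset.sum_range_succ, cumAngle_succ, pow_succ]
    rcases Nat.even_or_odd n with h | h
    · rw [if_pos h, if_neg (Nat.not_even_iff_odd.2 h.add_one), ← mul_assoc, ← Complex.exp_add,
        h.neg_one_pow]
      congr 3
      push_cast; ring
    · rw [if_neg (Nat.not_even_iff_odd.2 h), if_pos h.add_one, map_mul, conj_conj, ← exp_conj,
        ← mul_assoc, ← Complex.exp_add, h.neg_one_pow]
      congr 3
      simp only [map_mul, conj_ofReal, conj_I]
      push_cast; ring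

theorem foldIsometry_succ_apply_of_eq {α : ℕ → ℝ} {n : ℕ} {z : ℂ}
    (hz : z = ‖z‖ * cexp (cumAngle α (n + 1) * I)) :
    foldIsometry α (n + 1) z = foldIsometry α n z := by
  rw [foldIsometry, LinearIsometryEquiv.trans_apply, hz, lineReflection_apply_ofReal_mul]

theorem foldIsometry_eq_refl_iff {α : ℕ → ℝ} {k : ℕ} (hk : 1 ≤ k) (hpos : ∀ i < k, 0 < α i)
    (hsum : ∑ i ∈ Finset.range k, α i = 2 * π) :
    foldIsometry α k = LinearIsometryEquiv.refl ℝ ℂ ↔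
      Even k ∧ ∑ i ∈ Finset.range k, (-1 : ℝ) ^ i * α i = 0 := by
  have hθ : cumAngle α k = 2 * π := hsum
  constructor
  · intro h
    have h₁ := LinearIsometryEquiv.congr_fun h 1
    have hI := LinearIsometryEquiv.congr_fun h I
    simp only [foldIsometry_apply, LinearIsometryEquiv.coe_refl, id, map_one, conj_I] at h₁ hI
    have heven : Even k := by
      by_contra hodd
      rw [if_neg hodd, mul_one] at h₁
      rw [if_neg hodd, h₁] at hI
      have : (2 : ℂ) * I = 0 := by linear_combination -hI
      simp at this
    rw [if_pos heven, mul_one, heven.neg_one_pow, hθ, ← Circle.coe_exp, Circle.coe_eq_one,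
      Circle.exp_eq_one] at h₁
    obtain ⟨n, hn⟩ := h₁
    have hA := abs_alternatingSum_lt (by obtain ⟨m, rfl⟩ := heven; omega) hpos
    rw [hsum, abs_lt] at hA
    have hn₁ : n < 0 := by exact_mod_cast (show (n : ℝ) < 0 by nlinarith [pi_pos])
    have hn₂ : -2 < n := by exact_mod_cast (show (-2 : ℝ) < n by nlinarith [pi_pos])
    obtain rfl : n = -1 := by omega
    refine ⟨heven, by push_cast at hn; linarith⟩
  · rintro ⟨heven, hA⟩
    ext z
    rw [foldIsometry_apply, if_pos heven, heven.neg_one_pow, hA, hθ]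
    simp [Complex.exp_neg]

/-- `sector α i` and `creaseRay α i`, transported to `ℂ` by `Complex.orthonormalBasisOneI`. -/
def complexSector (α : ℕ → ℝ) (i : ℕ) : Set ℂ :=
  {z | ∃ t ∈ Icc (cumAngle α (i - 1)) (cumAngle α i), z = ‖z‖ * cexp (t * I)}

def complexCreaseRay (α : ℕ → ℝ) (i : ℕ) : Set ℂ :=
  {z | z = ‖z‖ * cexp (cumAngle α i * I)}

theorem exp_mem_complexSector {α : ℕ → ℝ} {i : ℕ} {t : ℝ}
    (ht : t ∈ Icc (cumAngle α (i - 1)) (cumAngle α i)) : cexp (t * I) ∈ complexSector α i :=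
  ⟨t, ht, by rw [norm_exp_ofReal_mul_I, ofReal_one, one_mul]⟩

theorem exp_mem_complexCreaseRay (α : ℕ → ℝ) (i : ℕ) :
    cexp (cumAngle α i * I) ∈ complexCreaseRay α i := by
  show _ = _
  rw [norm_exp_ofReal_mul_I, ofReal_one, one_mul]

theorem eq_norm_mul_exp_add_arg_div {x : ℂ} {θ : ℝ} (hx : x = ‖x‖ * cexp (θ * I)) (hx₀ : x ≠ 0)
    (z : ℂ) : z = ‖z‖ * cexp (↑(θ + arg (z / x)) * I) := by
  rcases eq_or_ne z 0 with rfl | hz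
  · simp
  have h := norm_mul_exp_arg_mul_I (z / x)
  rw [norm_div] at h
  have hx' : (‖x‖ : ℂ) ≠ 0 := ofReal_ne_zero.2 (norm_ne_zero_iff.2 hx₀)
  calc z = x * (z / x) := by field_simp
    _ = ‖x‖ * cexp (θ * I) * (↑(‖z‖ / ‖x‖) * cexp (arg (z / x) * I)) := by rw [h, ← hx]
    _ = ‖z‖ * cexp (↑(θ + arg (z / x)) * I) := by
      push_cast; rw [add_mul, Complex.exp_add]; field_simp

/-- Sector `i % k + 1` is the sector following sector `i` counterclockwise (sector `1` follows
sector `k`). -/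
theorem eventually_mem_complexSector {α : ℕ → ℝ} {k i : ℕ} (hpos : ∀ i < k, 0 < α i)
    (hsum : ∑ i ∈ Finset.range k, α i = 2 * π) (hi : 1 ≤ i) (hik : i ≤ k) {x : ℂ}
    (hx : x ∈ complexCreaseRay α i) (hx₀ : x ≠ 0) :
    ∀ᶠ z in 𝓝 x, (arg (z / x) ≤ 0 → z ∈ complexSector α i) ∧
      (0 ≤ arg (z / x) → z ∈ complexSector α (i % k + 1)) := by
  obtain ⟨j, rfl⟩ : ∃ j, i = j + 1 := ⟨i - 1, by omega⟩
  have hε : 0 < min (α j) (α ((j + 1) % k)) :=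
    lt_min (hpos j (by omega)) (hpos _ (Nat.mod_lt _ (by omega)))
  have harg : Tendsto (fun z => arg (z / x)) (𝓝 x) (𝓝 0) := by
    have h₁ : Tendsto (fun z => z / x) (𝓝 x) (𝓝 1) := by
      simpa [div_self hx₀] using (continuous_id.div_const x).tendsto x
    have := (continuousAt_arg one_mem_slitPlane).tendsto.comp h₁
    rwa [arg_one] at this
  filter_upwards [harg.eventually (Ioo_mem_nhds (neg_lt_zero.2 hε) hε)] with z ⟨hz₁, hz₂⟩
  have hz := eq_norm_mul_exp_add_arg_div hx hx₀ z
  have hj := cumAngle_succ α j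
  refine ⟨fun h => ⟨_, ⟨?_, ?_⟩, hz⟩, fun h => ?_⟩
  · simp only [Nat.add_sub_cancel]; linarith [min_le_left (α j) (α ((j + 1) % k))]
  · linarith
  rcases (Nat.lt_or_ge (j + 1) k) with hjk | hjk
  · rw [Nat.mod_eq_of_lt hjk] at hz₂ ⊢
    have := cumAngle_succ α (j + 1)
    refine ⟨_, ⟨?_, ?_⟩, hz⟩
    · simp only [Nat.add_sub_cancel]; linarith
    · linarith [min_le_right (α j) (α (j + 1))]
  · obtain rfl : j + 1 = k := by omega
    rw [Nat.mod_self] at hz₂ ⊢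
    refine ⟨arg (z / x), ⟨?_, ?_⟩, ?_⟩
    · simpa [cumAngle_zero] using h
    · simp only [zero_add, cumAngle_succ, cumAngle_zero]; linarith [min_le_right (α j) (α 0)]
    · have hθ : cumAngle α (j + 1) = 2 * π := hsum
      rwa [hθ, ofReal_add, add_mul, Complex.exp_add, ofReal_mul, ofReal_ofNat,
        Complex.exp_two_pi_mul_I, one_mul] at hz

theorem isClosed_complexSector (α : ℕ → ℝ) (i : ℕ) : IsClosed (complexSector α i) := by
  set J := Icc (cumAngle α (i - 1)) (cumAngle α i)
  have : complexSector α i = Prod.fst '' {p : ℂ × J | p.1 = ‖p.1‖ * cexp ((p.2 : ℝ) * I)} := by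
    ext z
    constructor
    · rintro ⟨t, ht, hz⟩
      exact ⟨(z, ⟨t, ht⟩), hz, rfl⟩
    · rintro ⟨⟨z, t, ht⟩, hz, rfl⟩
      exact ⟨t, ht, hz⟩
  rw [this]
  exact isClosedMap_fst_of_compactSpace _ (isClosed_eq continuous_fst (by fun_prop))

theorem exists_mem_complexSector {α : ℕ → ℝ} {k : ℕ} (hk : 1 ≤ k)
    (hsum : ∑ i ∈ Finset.range k, α i = 2 * π) (z : ℂ) :
    ∃ i < k, z ∈ complexSector α (i + 1) := by
  obtain ⟨t, ht₀, ht₁, hz⟩ : ∃ t, 0 ≤ t ∧ t ≤ 2 * π ∧ z = ‖z‖ * cexp (t * I) := by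
    rcases le_or_gt 0 (arg z) with h | h
    · exact ⟨arg z, h, (arg_le_pi z).trans (by linarith [pi_pos]),
        (norm_mul_exp_arg_mul_I z).symm⟩
    · refine ⟨arg z + 2 * π, by linarith [neg_pi_lt_arg z], by linarith, ?_⟩
      push_cast
      rw [add_mul, Complex.exp_add, Complex.exp_two_pi_mul_I, mul_one, norm_mul_exp_arg_mul_I]
  have hlast : t ≤ cumAngle α (k - 1 + 1) := by rw [Nat.sub_add_cancel hk]; exact ht₁.trans hsum.ge
  have hex : ∃ n, t ≤ cumAngle α (n + 1) := ⟨k - 1, hlast⟩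
  classical
  refine ⟨Nat.find hex, ?_, t, ⟨?_, Nat.find_spec hex⟩, hz⟩
  · have := Nat.find_min' hex hlast
    omega
  · rw [Nat.add_sub_cancel]
    rcases Nat.eq_zero_or_pos (Nat.find hex) with h | h
    · rw [h, cumAngle_zero]; exact ht₀
    · have := Nat.find_min hex (Nat.sub_lt h one_pos)
      rw [Nat.sub_add_cancel (Nat.one_le_iff_ne_zero.2 h.ne')] at this
      exact (not_le.1 this).le

def IsFlatOrigami (α : ℕ → ℝ) (k : ℕ) (F : ℂ → ℂ) : Prop :=
  Continuous F ∧
    (∀ i, 1 ≤ i → i ≤ k → ∀ x ∈ complexSector α i, ∀ y ∈ complexSector α i,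
      dist (F x) (F y) = dist x y) ∧
    (∀ i, 1 ≤ i → i ≤ k → ∀ x ∈ complexCreaseRay α i, x ≠ 0 → ¬ DifferentiableAt ℝ F x)

theorem exists_linearIsometryEquiv_eqOn_complexSector {α : ℕ → ℝ} {k i : ℕ}
    (hpos : ∀ i < k, 0 < α i) (hi : 1 ≤ i) (hik : i ≤ k) {F : ℂ → ℂ}
    (hF : ∀ x ∈ complexSector α i, ∀ y ∈ complexSector α i, dist (F x) (F y) = dist x y) :
    ∃ L : ℂ ≃ₗᵢ[ℝ] ℂ, ∀ z ∈ complexSector α i, F z = F 0 + L z := by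
  have hθ := cumAngle_succ α (i - 1)
  rw [Nat.sub_add_cancel hi] at hθ
  have hα := hpos (i - 1) (by omega)
  set δ := min (α (i - 1)) (π / 2)
  have hδ : 0 < δ := lt_min hα (by linarith [pi_pos])
  exact exists_linearIsometryEquiv_eqOn
    (S := complexSector α i) (a := cumAngle α (i - 1)) (b := cumAngle α (i - 1) + δ)
    ⟨cumAngle α i, ⟨by linarith, le_rfl⟩, by simp⟩
    (exp_mem_complexSector ⟨le_rfl, by linarith⟩)
    (exp_mem_complexSector ⟨by linarith, by linarith [min_le_left (α (i - 1)) (π / 2)]⟩)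
    (exp_two_mul_mul_I_ne (by linarith) (by linarith [min_le_right (α (i - 1)) (π / 2)])) hF

theorem eq_lineReflection_trans_of_not_differentiableAt {α : ℕ → ℝ} {k i : ℕ}
    (hpos : ∀ i < k, 0 < α i) (hsum : ∑ i ∈ Finset.range k, α i = 2 * π) (hi : 1 ≤ i)
    (hik : i ≤ k) {F : ℂ → ℂ} {L L' : ℂ ≃ₗᵢ[ℝ] ℂ}
    (hL : ∀ z ∈ complexSector α i, F z = F 0 + L z)
    (hL' : ∀ z ∈ complexSector α (i % k + 1), F z = F 0 + L' z)
    (hF : ¬ DifferentiableAt ℝ F (cexp (cumAngle α i * I))) :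
    L' = (lineReflection (cumAngle α i)).trans L := by
  have hx₀ := Complex.exp_ne_zero (cumAngle α i * I)
  have hsides :=
    eventually_mem_complexSector hpos hsum hi hik (exp_mem_complexCreaseRay α i) hx₀
  have hmem := hsides.self_of_nhds
  simp only [div_self hx₀, arg_one, le_refl, forall_const] at hmem
  refine (eq_or_eq_lineReflection_trans_of_apply_eq
    (add_left_cancel ((hL' _ hmem.2).symm.trans (hL _ hmem.1)))).resolve_left fun h => hF ?_
  exact (differentiableAt_iff_eq_of_eqOn_sides hx₀ hsides (A := (L : ℂ →L[ℝ] ℂ))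
    (B := (L' : ℂ →L[ℝ] ℂ)) hL hL').2 (by rw [h])

theorem foldIsometry_eq_refl_of_isFlatOrigami {α : ℕ → ℝ} {k : ℕ} (hk : 1 ≤ k)
    (hpos : ∀ i < k, 0 < α i) (hsum : ∑ i ∈ Finset.range k, α i = 2 * π) {F : ℂ → ℂ}
    (hF : IsFlatOrigami α k F) : foldIsometry α k = .refl ℝ ℂ := by
  obtain ⟨-, hiso, hnd⟩ := hF
  have hL : ∀ i, ∃ L : ℂ ≃ₗᵢ[ℝ] ℂ,
      1 ≤ i → i ≤ k → ∀ z ∈ complexSector α i, F z = F 0 + L z := by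
    intro i
    by_cases hi : 1 ≤ i ∧ i ≤ k
    · obtain ⟨L, hL⟩ :=
        exists_linearIsometryEquiv_eqOn_complexSector hpos hi.1 hi.2 (hiso i hi.1 hi.2)
      exact ⟨L, fun _ _ => hL⟩
    · exact ⟨.refl ℝ ℂ, fun h₁ h₂ => absurd ⟨h₁, h₂⟩ hi⟩
  choose L hL using hL
  have hcrease : ∀ i, 1 ≤ i → i ≤ k →
      L (i % k + 1) = (lineReflection (cumAngle α i)).trans (L i) := fun i hi hik =>
    eq_lineReflection_trans_of_not_differentiableAt hpos hsum hi hik (hL i hi hik)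
      (hL _ (by omega) (Nat.mod_lt _ (by omega)))
      (hnd i hi hik _ (exp_mem_complexCreaseRay α i) (Complex.exp_ne_zero _))
  have hind : ∀ n < k, L (n + 1) = (foldIsometry α n).trans (L 1) := by
    intro n
    induction n with
    | zero => intro; rfl
    | succ n ih =>
      intro hn
      have := hcrease (n + 1) (by omega) hn.le
      rw [Nat.mod_eq_of_lt hn] at this
      rw [this, ih (by omega)]
      rfl
  have hwrap := hcrease k hk le_rfl
  obtain ⟨n, rfl⟩ : ∃ n, k = n + 1 := ⟨k - 1, by omega⟩
  rw [Nat.mod_self, hind n (by omega)] at hwrap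
  ext z
  exact (L 1).injective (LinearIsometryEquiv.congr_fun hwrap z).symm

theorem foldIsometry_apply_eq_of_mem_inter {α : ℕ → ℝ} {k : ℕ} (hpos : ∀ i < k, 0 < α i)
    (hsum : ∑ i ∈ Finset.range k, α i = 2 * π) (hfold : foldIsometry α k = .refl ℝ ℂ)
    {i j : ℕ} (hij : i < j) (hjk : j < k) {z : ℂ} (hzi : z ∈ complexSector α (i + 1))
    (hzj : z ∈ complexSector α (j + 1)) : foldIsometry α i z = foldIsometry α j z := by
  obtain ⟨t, ⟨ht₁, ht₂⟩, hzt⟩ := hzi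
  obtain ⟨t', ⟨ht₁', ht₂'⟩, hzt'⟩ := hzj
  rw [Nat.add_sub_cancel] at ht₁ ht₁'
  rcases eq_or_ne z 0 with rfl | hz
  · simp
  have hmono := strictMonoOn_cumAngle hpos
  have hθ : cumAngle α k = 2 * π := hsum
  have h₁ : cumAngle α (i + 1) ≤ cumAngle α j :=
    hmono.monotoneOn (mem_Iic.2 (by omega)) (mem_Iic.2 (by omega)) (by omega)
  have h₂ : cumAngle α 0 ≤ cumAngle α i :=
    hmono.monotoneOn (mem_Iic.2 (by omega)) (mem_Iic.2 (by omega)) (by omega)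
  have h₃ : cumAngle α (j + 1) ≤ cumAngle α k :=
    hmono.monotoneOn (mem_Iic.2 (by omega)) (mem_Iic.2 le_rfl) (by omega)
  rw [cumAngle_zero] at h₂
  have hnz : (‖z‖ : ℂ) ≠ 0 := ofReal_ne_zero.2 (norm_ne_zero_iff.2 hz)
  rcases eq_or_eq_zero_and_eq_two_pi_of_exp_eq (by linarith) (by linarith) (by linarith)
    (mul_left_cancel₀ hnz (hzt.symm.trans hzt')) with rfl | ⟨rfl, rfl⟩
  · obtain rfl : i + 1 = j :=
      hmono.injOn (mem_Iic.2 (by omega)) (mem_Iic.2 (by omega)) (by linarith)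
    rw [show t = cumAngle α (i + 1) by linarith] at hzt
    exact (foldIsometry_succ_apply_of_eq hzt).symm
  · obtain rfl : i = 0 :=
      hmono.injOn (mem_Iic.2 (by omega)) (mem_Iic.2 (by omega)) (by rw [cumAngle_zero]; linarith)
    obtain rfl : j + 1 = k := hmono.injOn (mem_Iic.2 (by omega)) (mem_Iic.2 le_rfl) (by linarith)
    rw [show 2 * π = cumAngle α (j + 1) from hθ.symm] at hzt'
    rw [← foldIsometry_succ_apply_of_eq hzt', hfold]
    rfl

theorem exists_isFlatOrigami_of_foldIsometry_eq_refl {α : ℕ → ℝ} {k : ℕ} (hk : 1 ≤ k)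
    (hpos : ∀ i < k, 0 < α i) (hsum : ∑ i ∈ Finset.range k, α i = 2 * π)
    (hfold : foldIsometry α k = .refl ℝ ℂ) : ∃ F, IsFlatOrigami α k F := by
  obtain ⟨F, hFc, hF⟩ := exists_continuous_forall_mem_eq (ι := Fin k)
    (S := fun i => complexSector α (i + 1)) (g := fun i => foldIsometry α i)
    (fun i => isClosed_complexSector α _)
    (fun z => let ⟨i, hi, hz⟩ := exists_mem_complexSector hk hsum z; ⟨⟨i, hi⟩, hz⟩)
    (fun i => (foldIsometry α i).continuous) (fun i j z hzi hzj => by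
      rcases lt_trichotomy i.1 j.1 with h | h | h
      · exact foldIsometry_apply_eq_of_mem_inter hpos hsum hfold h j.2 hzi hzj
      · rw [Fin.ext h]
      · exact (foldIsometry_apply_eq_of_mem_inter hpos hsum hfold h i.2 hzj hzi).symm)
  have hsector : ∀ i, 1 ≤ i → i ≤ k → ∀ z ∈ complexSector α i, F z = foldIsometry α (i - 1) z :=
    fun i hi hik z hz => hF ⟨i - 1, by omega⟩ z (by simpa [Nat.sub_add_cancel hi] using hz)
  have hnext : ∀ i, 1 ≤ i → i ≤ k → ∀ z ∈ complexSector α (i % k + 1),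
      F z = foldIsometry α i z := by
    intro i hi hik z hz
    rcases hik.lt_or_eq with h | rfl
    · rw [Nat.mod_eq_of_lt h] at hz
      simpa using hsector (i + 1) (by omega) h z hz
    · rw [Nat.mod_self] at hz
      rw [hsector 1 le_rfl hk z hz, hfold]
      rfl
  refine ⟨F, hFc, fun i hi hik x hx y hy => ?_, fun i hi hik x hx hx₀ hdiff => ?_⟩
  · rw [hsector i hi hik x hx, hsector i hi hik y hy, LinearIsometryEquiv.dist_map]
  obtain ⟨j, rfl⟩ : ∃ j, i = j + 1 := ⟨i - 1, by omega⟩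
  have hAB := (differentiableAt_iff_eq_of_eqOn_sides hx₀
    (eventually_mem_complexSector hpos hsum hi hik hx hx₀) (c := 0)
    (A := (foldIsometry α j : ℂ →L[ℝ] ℂ)) (B := (foldIsometry α (j + 1) : ℂ →L[ℝ] ℂ))
    (fun z hz => by simpa using hsector _ hi hik z hz)
    (fun z hz => by simpa using hnext _ hi hik z hz)).1 hdiff
  apply lineReflection_ne_refl (cumAngle α (j + 1))
  ext w
  apply (foldIsometry α j).injective
  simpa [foldIsometry] using (DFunLike.congr_fun hAB w).symm

theorem repr_ofReal_mul_exp (r t : ℝ) :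
    orthonormalBasisOneI.repr (r * cexp (t * I)) = r • dirVec t := by
  ext j
  fin_cases j <;> simp [dirVec, exp_ofReal_mul_I_re, exp_ofReal_mul_I_im]

theorem eq_norm_mul_of_eq_mul {z : ℂ} {r t : ℝ} (hr : 0 ≤ r) (hz : z = r * cexp (t * I)) :
    z = ‖z‖ * cexp (t * I) := by
  rw [hz, norm_mul, norm_exp_ofReal_mul_I, mul_one, norm_real, Real.norm_of_nonneg hr]

theorem repr_mem_sector_iff (α : ℕ → ℝ) (i : ℕ) (z : ℂ) :
    orthonormalBasisOneI.repr z ∈ sector α i ↔ z ∈ complexSector α i := by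
  constructor
  · rintro ⟨r, t, hr, h₁, h₂, hz⟩
    rw [← repr_ofReal_mul_exp] at hz
    exact ⟨t, ⟨h₁, h₂⟩, eq_norm_mul_of_eq_mul hr (LinearIsometryEquiv.injective _ hz)⟩
  · rintro ⟨t, ⟨h₁, h₂⟩, hz⟩
    exact ⟨‖z‖, t, norm_nonneg z, h₁, h₂, by rw [← repr_ofReal_mul_exp, ← hz]⟩

theorem repr_mem_creaseRay_iff (α : ℕ → ℝ) (i : ℕ) (z : ℂ) :
    orthonormalBasisOneI.repr z ∈ creaseRay α i ↔ z ∈ complexCreaseRay α i := by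
  constructor
  · rintro ⟨r, hr, hz⟩
    rw [← repr_ofReal_mul_exp] at hz
    exact eq_norm_mul_of_eq_mul hr (LinearIsometryEquiv.injective _ hz)
  · intro hz
    exact ⟨‖z‖, norm_nonneg z, by rw [← repr_ofReal_mul_exp, ← hz]⟩

theorem isFlatOrigami_comp_iff (α : ℕ → ℝ) (k : ℕ)
    (f : EuclideanSpace ℝ (Fin 2) → EuclideanSpace ℝ (Fin 2)) :
    IsFlatOrigami α k (orthonormalBasisOneI.repr.symm ∘ f ∘ orthonormalBasisOneI.repr) ↔
      Continuous f ∧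
      (∀ i, 1 ≤ i → i ≤ k → ∀ x ∈ sector α i, ∀ y ∈ sector α i,
        dist (f x) (f y) = dist x y) ∧
      (∀ i, 1 ≤ i → i ≤ k → ∀ x ∈ creaseRay α i, x ≠ 0 → ¬ DifferentiableAt ℝ f x) := by
  have hd : ∀ z, DifferentiableAt ℝ (f ∘ orthonormalBasisOneI.repr) z ↔
      DifferentiableAt ℝ f (orthonormalBasisOneI.repr z) := fun z =>
    orthonormalBasisOneI.repr.toContinuousLinearEquiv.comp_right_differentiableAt_iff
  rw [IsFlatOrigami, orthonormalBasisOneI.repr.symm.comp_continuous_iff,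
    ← orthonormalBasisOneI.repr.coe_toHomeomorph, Homeomorph.comp_continuous_iff']
  simp only [orthonormalBasisOneI.repr.surjective.forall, repr_mem_sector_iff,
    repr_mem_creaseRay_iff, Function.comp_apply, LinearIsometryEquiv.dist_map, ne_eq,
    LinearIsometryEquiv.map_eq_zero_iff, orthonormalBasisOneI.repr.symm.comp_differentiableAt_iff,
    LinearIsometryEquiv.coe_toHomeomorph, hd]

theorem exists_iff_exists_isFlatOrigami (α : ℕ → ℝ) (k : ℕ) :
    (∃ f : EuclideanSpace ℝ (Fin 2) → EuclideanSpace ℝ (Fin 2),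
      Continuous f ∧
      (∀ i, 1 ≤ i → i ≤ k → ∀ x ∈ sector α i, ∀ y ∈ sector α i,
        dist (f x) (f y) = dist x y) ∧
      (∀ i, 1 ≤ i → i ≤ k → ∀ x ∈ creaseRay α i, x ≠ 0 → ¬ DifferentiableAt ℝ f x)) ↔
    ∃ F, IsFlatOrigami α k F := by
  constructor
  · rintro ⟨f, hf⟩
    exact ⟨_, (isFlatOrigami_comp_iff α k f).2 hf⟩
  · rintro ⟨F, hF⟩
    refine ⟨orthonormalBasisOneI.repr ∘ F ∘ orthonormalBasisOneI.repr.symm,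
      (isFlatOrigami_comp_iff α k _).1 ?_⟩
    convert hF using 1
    ext z
    simp

end Kawasaki

/-- **Kawasaki's theorem.** For a single-vertex crease pattern with `k ≥ 1` crease rays
at cumulative angles `θ_i` of the positive sector angles `α 0, …, α (k-1)` summing to
`2π`, there is a flat origami — a continuous map of the plane to itself preserving
Euclidean distances on each closed sector and non-differentiable at every nonzero point
of every crease ray — if and only if `k` is even and the alternating sum
`α 0 - α 1 + α 2 - ⋯` vanishes. -/
theorem kawasaki (k : ℕ) (hk : 1 ≤ k) (α : ℕ → ℝ)
    (hpos : ∀ i < k, 0 < α i)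
    (hsum : ∑ i ∈ Finset.range k, α i = 2 * π) :
    (∃ f : EuclideanSpace ℝ (Fin 2) → EuclideanSpace ℝ (Fin 2),
      Continuous f ∧
      (∀ i, 1 ≤ i → i ≤ k → ∀ x ∈ sector α i, ∀ y ∈ sector α i,
        dist (f x) (f y) = dist x y) ∧
      (∀ i, 1 ≤ i → i ≤ k → ∀ x ∈ creaseRay α i, x ≠ 0 → ¬ DifferentiableAt ℝ f x)) ↔
    (Even k ∧ ∑ i ∈ Finset.range k, (-1 : ℝ) ^ i * α i = 0) := by
  rw [Kawasaki.exists_iff_exists_isFlatOrigami, ← Kawasaki.foldIsometry_eq_refl_iff hk hpos hsum]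
  exact ⟨fun ⟨_, hF⟩ => Kawasaki.foldIsometry_eq_refl_of_isFlatOrigami hk hpos hsum hF,
    Kawasaki.exists_isFlatOrigami_of_foldIsometry_eq_refl hk hpos hsum⟩
end

section
/- Let m, n ≥ 1, let μ be a locally valid MV assignment of the square grid crease pattern G_{m,n}, and let F be any face. Then the face flip μ_F is also locally valid. -/
set_option maxHeartbeats 1000000


/-- A crease edge of the `m × n` square grid crease pattern: a vertical crease
`V i j` between faces `(i,j)` and `(i+1,j)`, or a horizontal crease `H i j`
between faces `(i,j)` and `(i,j+1)`. -/
inductive Crease (m n : ℕ) : Type where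
  | V : (i j : ℕ) → i + 1 < m → j < n → Crease m n
  | H : (i j : ℕ) → i < m → j + 1 < n → Crease m n

/-- The face `F` borders the crease `e`. -/
def Borders {m n : ℕ} (F : ℕ × ℕ) : Crease m n → Prop
  | .V i j _ _ => F = (i, j) ∨ F = (i + 1, j)
  | .H i j _ _ => F = (i, j) ∨ F = (i, j + 1)

instance {m n : ℕ} (F : ℕ × ℕ) (e : Crease m n) : Decidable (Borders F e) :=
  match e with
  | .V i j _ _ => inferInstanceAs (Decidable (F = (i, j) ∨ F = (i + 1, j)))
  | .H i j _ _ => inferInstanceAs (Decidable (F = (i, j) ∨ F = (i, j + 1)))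

/-- A mountain-valley assignment takes values in `{-1, 1}`. -/
def IsMV {m n : ℕ} (μ : Crease m n → ℤ) : Prop :=
  ∀ e, μ e = 1 ∨ μ e = -1

/-- Local validity: at every interior vertex `(a+1, b+1)` the sum of `μ` over the four
incident crease edges is `2` or `-2`. -/
def LocallyValid {m n : ℕ} (μ : Crease m n → ℤ) : Prop :=
  ∀ a b : ℕ, ∀ ha : a + 1 < m, ∀ hb : b + 1 < n,
    μ (.V a b ha (by omega)) + μ (.V a (b + 1) ha hb) +
      μ (.H a b (by omega) hb) + μ (.H (a + 1) b ha hb) = 2 ∨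
    μ (.V a b ha (by omega)) + μ (.V a (b + 1) ha hb) +
      μ (.H a b (by omega) hb) + μ (.H (a + 1) b ha hb) = -2

/-- The face faceFlip of `μ` at the face `F`. -/
def faceFlip {m n : ℕ} (μ : Crease m n → ℤ) (F : ℕ × ℕ) (e : Crease m n) : ℤ :=
  if Borders F e then -μ e else μ e

/-- The faces of the `m × n` square grid. -/
def Faces (m n : ℕ) : Finset (ℕ × ℕ) := Finset.range m ×ˢ Finset.range n

/-- Flipping any face of a locally valid MV assignment of the square grid
yields a locally valid MV assignment. -/
theorem square_grid_flip_locally_valid (m n : ℕ) (hm : 1 ≤ m) (hn : 1 ≤ n)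
    (μ : Crease m n → ℤ) (hmv : IsMV μ) (hval : LocallyValid μ)
    (F : ℕ × ℕ) (hF : F ∈ Faces m n) :
    IsMV (faceFlip μ F) ∧ LocallyValid (faceFlip μ F) := by
  constructor
  · intro e
    unfold faceFlip
    rcases hmv e with h | h <;> split <;> omega
  · intro a b ha hb
    have h1 := hmv (.V a b ha (by omega))
    have h2 := hmv (.V a (b + 1) ha hb)
    have h3 := hmv (.H a b (by omega) hb)
    have h4 := hmv (.H (a + 1) b ha hb)
    have hv := hval a b ha hb
    obtain ⟨p, q⟩ := F
    unfold faceFlip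
    simp only [Borders, Prod.mk.injEq] at *
    set x1 := μ (.V a b ha (by omega)) with hx1
    set x2 := μ (.V a (b + 1) ha hb) with hx2
    set x3 := μ (.H a b (by omega) hb) with hx3
    set x4 := μ (.H (a + 1) b ha hb) with hx4
    clear_value x1 x2 x3 x4
    clear hx1 hx2 hx3 hx4 hmv hval hF hm hn
    split_ifs with c1 c2 c3 c4 c5 c6 c7 c8 c9 c10 c11 c12 c13 c14 c15 <;>
      first
        | (iterate 15
            first
              | clear c1 | clear c2 | clear c3 | clear c4 | clear c5
              | clear c6 | clear c7 | clear c8 | clear c9 | clear c10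
              | clear c11 | clear c12 | clear c13 | clear c14 | clear c15
              | skip
           omega)
        | (exfalso; clear h1 h2 h3 h4 hv x1 x2 x3 x4; omega)
end

section
/- Let m, n ≥ 1 and let μ_1, μ_2 be two locally valid MV assignments of the square grid crease pattern G_{m,n}. Then there exists a function c from the set of faces to ℤ/2ℤ such that for every crease edge e, bordered by faces F and F′, one has c(F) = c(F′) if and only if μ_1(e) = μ_2(e). -/
/-- One of the two faces bordering a crease. -/
def faceA {m n : ℕ} : Crease m n → ℕ × ℕ
  | .V i j _ _ => (i, j)
  | .H i j _ _ => (i, j)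

/-- The other face bordering a crease. -/
def faceB {m n : ℕ} : Crease m n → ℕ × ℕ
  | .V i j _ _ => (i + 1, j)
  | .H i j _ _ => (i, j + 1)

section aux


variable {m n : ℕ} (μ₁ μ₂ : Crease m n → ℤ)

/-- The disagreement indicator of two MV assignments. -/
noncomputable def dd (e : Crease m n) : ZMod 2 := if μ₁ e = μ₂ e then 0 else 1

/-- Extension of `dd` to vertical positions, zero outside the grid. -/
noncomputable def ddV (i j : ℕ) : ZMod 2 :=
  if h : i + 1 < m ∧ j < n then dd μ₁ μ₂ (.V i j h.1 h.2) else 0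

/-- Extension of `dd` to horizontal positions, zero outside the grid. -/
noncomputable def ddH (i j : ℕ) : ZMod 2 :=
  if h : i < m ∧ j + 1 < n then dd μ₁ μ₂ (.H i j h.1 h.2) else 0

/-- The coloring. -/
noncomputable def col (F : ℕ × ℕ) : ZMod 2 :=
  (Finset.range F.1).sum (fun k => ddV μ₁ μ₂ k 0) +
    (Finset.range F.2).sum (fun l => ddH μ₁ μ₂ F.1 l)

end aux

lemma parity_aux (x1 x2 x3 x4 y1 y2 y3 y4 : ℤ)
    (hx1 : x1 = 1 ∨ x1 = -1) (hx2 : x2 = 1 ∨ x2 = -1)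
    (hx3 : x3 = 1 ∨ x3 = -1) (hx4 : x4 = 1 ∨ x4 = -1)
    (hy1 : y1 = 1 ∨ y1 = -1) (hy2 : y2 = 1 ∨ y2 = -1)
    (hy3 : y3 = 1 ∨ y3 = -1) (hy4 : y4 = 1 ∨ y4 = -1)
    (hsx : x1 + x2 + x3 + x4 = 2 ∨ x1 + x2 + x3 + x4 = -2)
    (hsy : y1 + y2 + y3 + y4 = 2 ∨ y1 + y2 + y3 + y4 = -2) :
    (if x1 = y1 then (0 : ZMod 2) else 1) + (if x2 = y2 then 0 else 1) +
      (if x3 = y3 then 0 else 1) + (if x4 = y4 then 0 else 1) = 0 := by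
  rcases hx1 with rfl | rfl <;> rcases hx2 with rfl | rfl <;>
    rcases hx3 with rfl | rfl <;> rcases hx4 with rfl | rfl <;>
    rcases hy1 with rfl | rfl <;> rcases hy2 with rfl | rfl <;>
    rcases hy3 with rfl | rfl <;> rcases hy4 with rfl | rfl <;>
    first | omega | decide

/-- Given two locally valid MV assignments of the square grid, there is a
`ℤ/2ℤ`-valued function on faces that agrees across a crease exactly when the
two assignments agree on that crease. -/
theorem square_grid_two_coloring (m n : ℕ) (hm : 1 ≤ m) (hn : 1 ≤ n)
    (μ₁ μ₂ : Crease m n → ℤ) (hmv₁ : IsMV μ₁) (hmv₂ : IsMV μ₂)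
    (hval₁ : LocallyValid μ₁) (hval₂ : LocallyValid μ₂) :
    ∃ c : ℕ × ℕ → ZMod 2, ∀ e : Crease m n,
      (c (faceA e) = c (faceB e) ↔ μ₁ e = μ₂ e) := by
  classical
  -- cocycle condition
  have cocy : ∀ a b : ℕ, a + 1 < m → b + 1 < n →
      ddV μ₁ μ₂ a b + ddV μ₁ μ₂ a (b + 1) + ddH μ₁ μ₂ a b + ddH μ₁ μ₂ (a + 1) b = 0 := by
    intro a b ha hb
    have h1 : a + 1 < m ∧ b < n := ⟨ha, by omega⟩
    have h2 : a + 1 < m ∧ b + 1 < n := ⟨ha, hb⟩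
    have h3 : a < m ∧ b + 1 < n := ⟨by omega, hb⟩
    rw [ddV, ddV, ddH, ddH, dif_pos h1, dif_pos h2, dif_pos h3, dif_pos h2]
    have hs1 := hval₁ a b ha hb
    have hs2 := hval₂ a b ha hb
    exact parity_aux _ _ _ _ _ _ _ _ (hmv₁ _) (hmv₁ _) (hmv₁ _) (hmv₁ _)
      (hmv₂ _) (hmv₂ _) (hmv₂ _) (hmv₂ _) hs1 hs2
  have hhorz : ∀ i j : ℕ, col μ₁ μ₂ (i, j + 1) = col μ₁ μ₂ (i, j) + ddH μ₁ μ₂ i j := by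
    intro i j
    simp only [col, Finset.sum_range_succ]
    ring
  have hvert : ∀ i : ℕ, i + 1 < m → ∀ j : ℕ, j < n →
      col μ₁ μ₂ (i + 1, j) = col μ₁ μ₂ (i, j) + ddV μ₁ μ₂ i j := by
    intro i hi j
    induction j with
    | zero =>
      intro _
      simp only [col, Finset.sum_range_succ]
      ring
    | succ j ih =>
      intro hj
      have hjn : j < n := by omega
      rw [hhorz (i + 1) j, hhorz i j, ih hjn]
      have hc := cocy i j hi hj
      have h2 : (2 : ZMod 2) = 0 := by decide
      -- in ZMod 2 everything is its own negative
      linear_combination hc - (ddH μ₁ μ₂ i j + ddV μ₁ μ₂ i (j + 1)) * h2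
  refine ⟨col μ₁ μ₂, fun e => ?_⟩
  cases e with
  | V i j hi hj =>
    have := hvert i hi j hj
    simp only [faceA, faceB, this]
    rw [ddV, dif_pos ⟨hi, hj⟩, dd]
    constructor
    · intro h
      by_contra hne
      rw [if_neg hne] at h
      exact absurd h (by simp)
    · intro h
      rw [if_pos h, add_zero]
  | H i j hi hj =>
    have := hhorz i j
    simp only [faceA, faceB, this]
    rw [ddH, dif_pos ⟨hi, hj⟩, dd]
    constructor
    · intro h
      by_contra hne
      rw [if_neg hne] at h
      exact absurd h (by simp)
    · intro h
      rw [if_pos h, add_zero]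
end

section
/- Let m, n ≥ 1 and let μ_1, μ_2 be two locally valid MV assignments of the square grid crease pattern G_{m,n}. Suppose c is a function from the set of faces to ℤ/2ℤ such that for every crease edge e, bordered by faces F and F′, one has c(F) = c(F′) if and only if μ_1(e) = μ_2(e). Then the set S = {F : c(F) = 0} converts μ_1 into μ_2. In particular, there always exists a set of faces converting μ_1 into μ_2, i.e., μ_1 and μ_2 are face-flippable. -/
/-- A set `S` of faces converts `μ₁` into `μ₂` if for every crease edge `e`,
`μ₂ e = μ₁ e * (-1) ^ |{F ∈ S : F borders e}|`. -/
def Converts {m n : ℕ} (μ₁ μ₂ : Crease m n → ℤ) (S : Finset (ℕ × ℕ)) : Prop :=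
  ∀ e : Crease m n, μ₂ e = μ₁ e * (-1) ^ (S.filter (fun F => Borders F e)).card

/-- If `c` is a `ℤ/2ℤ`-valued function on faces agreeing across a crease exactly when
`μ₁` and `μ₂` agree on it, then the set of faces where `c = 0` converts `μ₁` into `μ₂`;
in particular some set of faces converts `μ₁` into `μ₂`. -/
theorem square_grid_coloring_gives_flip_set (m n : ℕ) (hm : 1 ≤ m) (hn : 1 ≤ n)
    (μ₁ μ₂ : Crease m n → ℤ) (hmv₁ : IsMV μ₁) (hmv₂ : IsMV μ₂)
    (hval₁ : LocallyValid μ₁) (hval₂ : LocallyValid μ₂)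
    (c : ℕ × ℕ → ZMod 2)
    (hc : ∀ e : Crease m n, (c (faceA e) = c (faceB e) ↔ μ₁ e = μ₂ e)) :
    Converts μ₁ μ₂ ((Faces m n).filter (fun F => c F = 0)) ∧
    ∃ S : Finset (ℕ × ℕ), S ⊆ Faces m n ∧ Converts μ₁ μ₂ S := by
  have key : Converts μ₁ μ₂ ((Faces m n).filter fun F => c F = 0) := by
    intro e
    have hAB : faceA e ≠ faceB e := by
      cases e <;> simp [faceA, faceB, Prod.ext_iff]
    have hAF : faceA e ∈ Faces m n := by
      cases e <;> simp only [faceA, Faces, Finset.mem_product, Finset.mem_range] <;>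
        constructor <;> omega
    have hBF : faceB e ∈ Faces m n := by
      cases e <;> simp only [faceB, Faces, Finset.mem_product, Finset.mem_range] <;>
        constructor <;> omega
    have hset : ((Faces m n).filter fun F => c F = 0).filter (fun F => Borders F e)
        = ({faceA e, faceB e} : Finset (ℕ × ℕ)).filter (fun F => c F = 0) := by
      ext F
      simp only [Finset.mem_filter, Finset.mem_insert, Finset.mem_singleton]
      constructor
      · rintro ⟨⟨_, hcF⟩, hb⟩
        refine ⟨?_, hcF⟩
        cases e <;> rcases hb with h | h <;> simp_all [faceA, faceB, Borders]
      · rintro ⟨h | h, hcF⟩ <;> subst h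
        · exact ⟨⟨hAF, hcF⟩, by cases e <;> simp [Borders, faceA]⟩
        · exact ⟨⟨hBF, hcF⟩, by cases e <;> simp [Borders, faceB]⟩
    rw [hset]
    have h1 := hmv₁ e
    have h2 := hmv₂ e
    have hce := hc e
    have hdi : ∀ x : ZMod 2, x = 0 ∨ x = 1 := by decide
    have hcard :
        (({faceA e, faceB e} : Finset (ℕ × ℕ)).filter (fun F => c F = 0)).card
          = if c (faceA e) = 0 then (if c (faceB e) = 0 then 2 else 1)
            else (if c (faceB e) = 0 then 1 else 0) := by
      rw [Finset.filter_insert, Finset.filter_singleton]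
      split_ifs with hA hB hB <;>
        simp [Finset.card_insert_of_notMem, Finset.mem_singleton, hAB]
    rcases hdi (c (faceA e)) with hA | hA <;> rcases hdi (c (faceB e)) with hB | hB
    · have : μ₁ e = μ₂ e := hce.mp (by rw [hA, hB])
      rw [hcard]; simp [hA, hB, ← this]
    · have : μ₁ e ≠ μ₂ e := fun h => by
        have := hce.mpr h; rw [hA, hB] at this; exact absurd this (by decide)
      rw [hcard]; simp only [hA, hB, if_pos rfl]
      rcases h1 with h | h <;> rcases h2 with h' | h' <;> simp_all <;> omega
    · have : μ₁ e ≠ μ₂ e := fun h => by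
        have := hce.mpr h; rw [hA, hB] at this; exact absurd this (by decide)
      rw [hcard]; simp only [hA, hB]
      rcases h1 with h | h <;> rcases h2 with h' | h' <;> simp_all <;> omega
    · have : μ₁ e = μ₂ e := hce.mp (by rw [hA, hB])
      rw [hcard]; simp [hA, hB, ← this]
  exact ⟨key, _, Finset.filter_subset _ _, key⟩
end

section
/- Let m, n ≥ 1, let μ_1, μ_2 be locally valid MV assignments of the square grid crease pattern G_{m,n}, and let S be a set of faces converting μ_1 into μ_2. Then: (a) a finite sequence (F_1, …, F_L) of faces, applied as successive face flips starting from μ_1, yields μ_2 if and only if the set of faces occurring an odd number of times in the sequence converts μ_1 into μ_2; and (b) the minimum length of such a sequence equals min(|S|, mn − |S|). -/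
/-- Applying the face flips of a list of faces in succession, starting from `μ`. -/
def flipSeq {m n : ℕ} (μ : Crease m n → ℤ) (L : List (ℕ × ℕ)) : Crease m n → ℤ :=
  L.foldl (fun ν F => faceFlip ν F) μ

/-!
Face flips commute and each is an involution, so a flip sequence acts only through the set of
faces it uses an odd number of times; this is (a), and a sequence of length `L` thus yields a
converting set with at most `L` faces, while a converting set is realised by listing each of its
faces once. Since `μ₁` takes values `±1`, two converting sets `S`, `T` flip every crease with the
same parity, so whether a face lies in both or neither of `S`, `T` is the same for the two faces
of any crease. The grid is connected through its creases, hence `T = S` or `T` is the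
complement of `S`, of sizes `|S|` and `mn - |S|`.
-/

open Finset

section OddOccurrences

variable {α : Type*} [BEq α] [DecidableEq α]

def oddOccurrences (L : List α) : Finset α :=
  L.toFinset.filter (fun a => Odd (L.count a))

theorem card_oddOccurrences_le (L : List α) : (oddOccurrences L).card ≤ L.length :=
  (card_filter_le _ _).trans L.toFinset_card_le

variable [LawfulBEq α]

theorem neg_one_pow_countP_eq_card_oddOccurrences (L : List α) (p : α → Prop)
    [DecidablePred p] :
    (-1 : ℤ) ^ L.countP (p ·) = (-1) ^ ((oddOccurrences L).filter p).card := by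
  obtain rfl := lawful_beq_subsingleton ‹BEq α› instBEqOfDecidableEq
  rw [← sum_filter_count_eq_countP, ← prod_pow_eq_pow_sum, oddOccurrences, filter_comm,
    card_filter, ← prod_pow_eq_pow_sum]
  refine prod_congr rfl fun a _ => ?_
  split_ifs with h
  · exact h.neg_one_pow
  · exact (Nat.not_odd_iff_even.1 h).neg_one_pow

theorem oddOccurrences_toList (s : Finset α) : oddOccurrences s.toList = s := by
  rw [oddOccurrences, toList_toFinset]
  exact filter_true_of_mem fun a ha => by
    rw [List.count_eq_one_of_mem s.nodup_toList (mem_toList.2 ha)]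
    exact odd_one

end OddOccurrences

namespace Crease

variable {m n : ℕ}

def face₁ : Crease m n → ℕ × ℕ
  | .V i j _ _ => (i, j)
  | .H i j _ _ => (i, j)

def face₂ : Crease m n → ℕ × ℕ
  | .V i j _ _ => (i + 1, j)
  | .H i j _ _ => (i, j + 1)

theorem borders_iff (e : Crease m n) (F : ℕ × ℕ) :
    Borders F e ↔ F = e.face₁ ∨ F = e.face₂ := by
  cases e <;> rfl

theorem face₁_ne_face₂ (e : Crease m n) : e.face₁ ≠ e.face₂ := by
  cases e <;> simp [face₁, face₂]

theorem face₁_mem_faces (e : Crease m n) : e.face₁ ∈ Faces m n := by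
  cases e <;> simp [face₁, Faces] <;> omega

theorem face₂_mem_faces (e : Crease m n) : e.face₂ ∈ Faces m n := by
  cases e <;> simp [face₂, Faces] <;> omega

end Crease

section Grid

variable {m n : ℕ}

def faceSign (S : Finset (ℕ × ℕ)) (F : ℕ × ℕ) : ℤ := if F ∈ S then -1 else 1

theorem neg_one_pow_card_filter_borders (S : Finset (ℕ × ℕ)) (e : Crease m n) :
    (-1 : ℤ) ^ (S.filter (Borders · e)).card = faceSign S e.face₁ * faceSign S e.face₂ := by
  simp only [e.borders_iff, filter_or, filter_eq', faceSign]
  split_ifs <;> simp [card_pair e.face₁_ne_face₂]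

theorem faceSign_sdiff {S : Finset (ℕ × ℕ)} {F : ℕ × ℕ} (hF : F ∈ Faces m n) :
    faceSign (Faces m n \ S) F = -faceSign S F := by
  unfold faceSign
  split_ifs <;> simp_all

theorem card_faces_sdiff {S : Finset (ℕ × ℕ)} (hS : S ⊆ Faces m n) :
    (Faces m n \ S).card = m * n - S.card := by
  rw [card_sdiff_of_subset hS, Faces, card_product, card_range, card_range]

theorem flipSeq_apply (μ : Crease m n → ℤ) (L : List (ℕ × ℕ)) (e : Crease m n) :
    flipSeq μ L e = μ e * (-1) ^ L.countP (Borders · e) := by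
  induction L generalizing μ with
  | nil => simp [flipSeq]
  | cons F L ih =>
    change flipSeq (faceFlip μ F) L e = _
    rw [ih, List.countP_cons]
    by_cases hb : Borders F e <;> simp [faceFlip, hb, pow_succ]

theorem flipSeq_eq_iff_converts {μ₁ μ₂ : Crease m n → ℤ} (L : List (ℕ × ℕ)) :
    flipSeq μ₁ L = μ₂ ↔ Converts μ₁ μ₂ (oddOccurrences L) := by
  simp only [funext_iff, Converts, flipSeq_apply, neg_one_pow_countP_eq_card_oddOccurrences]
  exact forall_congr' fun _ => eq_comm

theorem Converts.flipSeq_toList {μ₁ μ₂ : Crease m n → ℤ} {S : Finset (ℕ × ℕ)}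
    (h : Converts μ₁ μ₂ S) : flipSeq μ₁ S.toList = μ₂ := by
  rwa [flipSeq_eq_iff_converts, oddOccurrences_toList]

theorem Converts.sdiff {μ₁ μ₂ : Crease m n → ℤ} {S : Finset (ℕ × ℕ)}
    (h : Converts μ₁ μ₂ S) : Converts μ₁ μ₂ (Faces m n \ S) := by
  intro e
  rw [h e, neg_one_pow_card_filter_borders, neg_one_pow_card_filter_borders,
    faceSign_sdiff e.face₁_mem_faces, faceSign_sdiff e.face₂_mem_faces, neg_mul_neg]

theorem eq_of_forall_crease {β : Type*} (f : ℕ × ℕ → β)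
    (hf : ∀ e : Crease m n, f e.face₁ = f e.face₂) {F : ℕ × ℕ} (hF : F ∈ Faces m n) :
    f F = f (0, 0) := by
  obtain ⟨i, j⟩ := F
  simp only [Faces, mem_product, mem_range] at hF
  obtain ⟨hi, hj⟩ := hF
  induction i with
  | succ i ih => exact (hf (.V i j hi hj)).symm.trans (ih (by omega))
  | zero =>
    induction j with
    | zero => rfl
    | succ j ih => exact (hf (.H 0 j hi hj)).symm.trans (ih (by omega))

theorem Converts.eq_or_eq_sdiff {μ₁ μ₂ : Crease m n → ℤ} (hμ₁ : ∀ e, μ₁ e ≠ 0)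
    {S T : Finset (ℕ × ℕ)} (hS : S ⊆ Faces m n) (hT : T ⊆ Faces m n)
    (hSconv : Converts μ₁ μ₂ S) (hTconv : Converts μ₁ μ₂ T) :
    T = S ∨ T = Faces m n \ S := by
  have hcrease (e : Crease m n) :
      (e.face₁ ∈ S ↔ e.face₁ ∈ T) = (e.face₂ ∈ S ↔ e.face₂ ∈ T) := by
    have h := mul_left_cancel₀ (hμ₁ e) ((hSconv e).symm.trans (hTconv e))
    simp only [neg_one_pow_card_filter_borders, faceSign] at h
    apply propext
    split_ifs at h <;> simp_all
  have hagree {F} (hF : F ∈ Faces m n) :=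
    eq_of_forall_crease (fun F => F ∈ S ↔ F ∈ T) hcrease hF
  by_cases h₀ : (0, 0) ∈ S ↔ (0, 0) ∈ T
  · refine .inl (ext fun F => ?_)
    by_cases hF : F ∈ Faces m n
    · exact ((hagree hF).symm ▸ h₀).symm
    · exact iff_of_false (hF <| hT ·) (hF <| hS ·)
  · refine .inr (ext fun F => ?_)
    rw [mem_sdiff]
    by_cases hF : F ∈ Faces m n
    · have := (hagree hF).symm ▸ h₀
      tauto
    · exact iff_of_false (hF <| hT ·) (hF ·.1)

end Grid

theorem square_grid_min_flip_sequence_general (m n : ℕ)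
    (μ₁ μ₂ : Crease m n → ℤ) (hmv₁ : IsMV μ₁)
    (S : Finset (ℕ × ℕ)) (hS : S ⊆ Faces m n) (hconv : Converts μ₁ μ₂ S) :
    (∀ L : List (ℕ × ℕ), (∀ F ∈ L, F ∈ Faces m n) →
      (flipSeq μ₁ L = μ₂ ↔
        Converts μ₁ μ₂ (L.toFinset.filter (fun F => Odd (L.count F))))) ∧
    IsLeast {len : ℕ | ∃ L : List (ℕ × ℕ), (∀ F ∈ L, F ∈ Faces m n) ∧
        flipSeq μ₁ L = μ₂ ∧ L.length = len}
      (min S.card (m * n - S.card)) := by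
  have hμ₁ (e : Crease m n) : μ₁ e ≠ 0 := by rcases hmv₁ e with h | h <;> simp [h]
  have hrealize (T : Finset (ℕ × ℕ)) (hT : T ⊆ Faces m n) (hTconv : Converts μ₁ μ₂ T) :
      ∃ L : List (ℕ × ℕ), (∀ F ∈ L, F ∈ Faces m n) ∧ flipSeq μ₁ L = μ₂ ∧ L.length = T.card :=
    ⟨T.toList, fun F hF => hT (mem_toList.1 hF), hTconv.flipSeq_toList, length_toList T⟩
  refine ⟨fun L _ => flipSeq_eq_iff_converts L, ?_, ?_⟩
  · rcases le_total S.card (m * n - S.card) with hle | hle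
    · rw [min_eq_left hle]
      exact hrealize S hS hconv
    · rw [min_eq_right hle, ← card_faces_sdiff hS]
      exact hrealize _ sdiff_subset hconv.sdiff
  · rintro _ ⟨L, hL, hflip, rfl⟩
    have hT : oddOccurrences L ⊆ Faces m n := fun F hF =>
      hL F (List.mem_toFinset.1 (filter_subset _ _ hF))
    refine le_trans ?_ (card_oddOccurrences_le L)
    rcases hconv.eq_or_eq_sdiff hμ₁ hS hT ((flipSeq_eq_iff_converts L).1 hflip) with h | h
    · exact h ▸ min_le_left _ _
    · exact h ▸ card_faces_sdiff hS ▸ min_le_right _ _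

/-- (a) A finite sequence of face flips starting from `μ₁` yields `μ₂` iff the set of
faces occurring an odd number of times in the sequence converts `μ₁` into `μ₂`;
(b) the minimum length of such a sequence is `min |S| (m * n - |S|)`, where `S` is any
set of faces converting `μ₁` into `μ₂`. -/
theorem square_grid_min_flip_sequence (m n : ℕ) (hm : 1 ≤ m) (hn : 1 ≤ n)
    (μ₁ μ₂ : Crease m n → ℤ) (hmv₁ : IsMV μ₁) (hmv₂ : IsMV μ₂)
    (hval₁ : LocallyValid μ₁) (hval₂ : LocallyValid μ₂)
    (S : Finset (ℕ × ℕ)) (hS : S ⊆ Faces m n) (hconv : Converts μ₁ μ₂ S) :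
    (∀ L : List (ℕ × ℕ), (∀ F ∈ L, F ∈ Faces m n) →
      (flipSeq μ₁ L = μ₂ ↔
        Converts μ₁ μ₂ (L.toFinset.filter (fun F => Odd (L.count F))))) ∧
    IsLeast {len : ℕ | ∃ L : List (ℕ × ℕ), (∀ F ∈ L, F ∈ Faces m n) ∧
        flipSeq μ₁ L = μ₂ ∧ L.length = len}
      (min S.card (m * n - S.card)) :=
  square_grid_min_flip_sequence_general m n μ₁ μ₂ hmv₁ S hS hconv
end

section
/- Let m, n ≥ 1 and let μ be a Miura-locally-valid MV assignment of the m×n Miura-ori. Then the associated coloring c_μ satisfies c_μ(i, j+1) = c_μ(i, j) + μ(H_{i,j}) (mod 3) for every horizontal crease H_{i,j} (0 ≤ i ≤ m−1, 0 ≤ j ≤ n−2). Consequently, c_μ is a proper 3-coloring of the faces: any two faces sharing a crease edge receive different values in ℤ/3ℤ. -/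
/-- Miura local validity at every interior vertex `v = (a+1, b+1)`:
(a) the sum of `μ` over the four incident creases is `2` or `-2`, and
(b) the values of `μ` on `V (a,b)`, `V (a,b+1)` and the near horizontal crease
(`H (a,b)` if the row index `b+1` is even, `H (a+1,b)` if it is odd) are not all equal. -/
def MiuraLocallyValid {m n : ℕ} (μ : Crease m n → ℤ) : Prop :=
  ∀ a b : ℕ, ∀ ha : a + 1 < m, ∀ hb : b + 1 < n,
    (μ (.V a b ha (by omega)) + μ (.V a (b + 1) ha hb) +
        μ (.H a b (by omega) hb) + μ (.H (a + 1) b ha hb) = 2 ∨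
      μ (.V a b ha (by omega)) + μ (.V a (b + 1) ha hb) +
        μ (.H a b (by omega) hb) + μ (.H (a + 1) b ha hb) = -2) ∧
    ¬ (μ (.V a b ha (by omega)) = μ (.V a (b + 1) ha hb) ∧
        μ (.V a (b + 1) ha hb) =
          μ (if (b + 1) % 2 = 0 then Crease.H a b (by omega) hb
             else Crease.H (a + 1) b ha hb))

/-- `c` is the coloring of the faces by `ℤ/3ℤ` associated to the MV assignment `μ`
of the Miura-ori: `c (0,0) = 0`; within row `j`, `c (i+1,j) = c (i,j) ± μ (V i j)`
with sign `+` for even `j` and `-` for odd `j`; and between rows,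
`c (m-1, j+1) = c (m-1, j) + μ (H (m-1) j)` for even `j` and
`c (0, j+1) = c (0, j) + μ (H 0 j)` for odd `j`. -/
def IsAssocColoring (m n : ℕ) (hm : 1 ≤ m) (μ : Crease m n → ℤ)
    (c : ℕ × ℕ → ZMod 3) : Prop :=
  c (0, 0) = 0 ∧
  (∀ i j : ℕ, ∀ hi : i + 1 < m, ∀ hj : j < n,
    c (i + 1, j) = c (i, j) +
      (if j % 2 = 0 then ((μ (.V i j hi hj) : ℤ) : ZMod 3)
       else -((μ (.V i j hi hj) : ℤ) : ZMod 3))) ∧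
  (∀ j : ℕ, ∀ hj : j + 1 < n, j % 2 = 0 →
    c (m - 1, j + 1) = c (m - 1, j) + ((μ (.H (m - 1) j (by omega) hj) : ℤ) : ZMod 3)) ∧
  (∀ j : ℕ, ∀ hj : j + 1 < n, j % 2 = 1 →
    c (0, j + 1) = c (0, j) + ((μ (.H 0 j (by omega) hj) : ℤ) : ZMod 3))

lemma miura_key1 (V V' H H' : ℤ)
    (hV : V = 1 ∨ V = -1) (hV' : V' = 1 ∨ V' = -1)
    (hH : H = 1 ∨ H = -1) (hH' : H' = 1 ∨ H' = -1)
    (hsum : V + V' + H + H' = 2 ∨ V + V' + H + H' = -2)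
    (hne : ¬ (V = V' ∧ V' = H')) : H = H' + V' + V := by omega

lemma miura_key2 (V V' H H' : ℤ)
    (hV : V = 1 ∨ V = -1) (hV' : V' = 1 ∨ V' = -1)
    (hH : H = 1 ∨ H = -1) (hH' : H' = 1 ∨ H' = -1)
    (hsum : V + V' + H + H' = 2 ∨ V + V' + H + H' = -2)
    (hne : ¬ (V = V' ∧ V' = H)) : H' = H + V' + V := by omega

lemma miura_cast_ne_zero (x : ℤ) (hx : x = 1 ∨ x = -1) : ((x : ZMod 3) ≠ 0) := by
  rcases hx with rfl | rfl <;> decide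

/-- For a Miura-locally-valid MV assignment, the associated coloring increases by
`μ (H i j)` (mod 3) across every horizontal crease, and is a proper 3-coloring of
the faces: faces sharing a crease get different colors. -/
theorem miura_coloring_proper (m n : ℕ) (hm : 1 ≤ m) (hn : 1 ≤ n)
    (μ : Crease m n → ℤ) (hmv : IsMV μ) (hval : MiuraLocallyValid μ)
    (c : ℕ × ℕ → ZMod 3) (hc : IsAssocColoring m n hm μ c) :
    (∀ i j : ℕ, ∀ hi : i < m, ∀ hj : j + 1 < n,
      c (i, j + 1) = c (i, j) + ((μ (.H i j hi hj) : ℤ) : ZMod 3)) ∧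
    (∀ e : Crease m n, c (faceA e) ≠ c (faceB e)) := by
  obtain ⟨hc0, hrow, heven, hodd⟩ := hc
  have horiz : ∀ i j : ℕ, ∀ hi : i < m, ∀ hj : j + 1 < n,
      c (i, j + 1) = c (i, j) + ((μ (.H i j hi hj) : ℤ) : ZMod 3) := by
    intro i j hi hj
    rcases Nat.mod_two_eq_zero_or_one j with hj2 | hj2
    · -- even row: downward induction from i = m-1
      have main : ∀ k : ℕ, ∀ i : ℕ, ∀ hik : i + k + 1 = m,
          c (i, j + 1) = c (i, j) +
            ((μ (.H i j (by omega) hj) : ℤ) : ZMod 3) := by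
        intro k
        induction k with
        | zero =>
          intro i hik
          have hi' : i = m - 1 := by omega
          subst hi'
          exact heven j hj hj2
        | succ k ih =>
          intro i hik
          have ha : i + 1 < m := by omega
          have hjn : j < n := by omega
          have h1 := ih (i + 1) (by omega)
          have h2 := hrow i j ha hjn
          have h3 := hrow i (j + 1) ha hj
          obtain ⟨hsum, hne⟩ := hval i j ha hj
          have hb' : ¬ ((j + 1) % 2 = 0) := by omega
          rw [if_neg hb'] at hne
          have hint : μ (Crease.H i j (by omega : i < m) hj) =
              μ (.H (i + 1) j ha hj) + μ (.V i (j + 1) ha hj) + μ (.V i j ha hjn) :=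
            miura_key1 _ _ _ _ (hmv _) (hmv _) (hmv _) (hmv _) hsum hne
          have hint3 : ((μ (Crease.H i j (by omega : i < m) hj) : ℤ) : ZMod 3) =
              ((μ (.H (i + 1) j ha hj) : ℤ) : ZMod 3) +
              ((μ (.V i (j + 1) ha hj) : ℤ) : ZMod 3) +
              ((μ (.V i j ha hjn) : ℤ) : ZMod 3) := by
            exact_mod_cast congrArg (fun z : ℤ => (z : ZMod 3)) hint
          rw [if_pos hj2] at h2
          rw [if_neg hb'] at h3
          linear_combination h1 + h2 - h3 - hint3
      exact main (m - 1 - i) i (by omega)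
    · -- odd row: upward induction from i = 0
      have main : ∀ i : ℕ, ∀ hi : i < m,
          c (i, j + 1) = c (i, j) + ((μ (.H i j hi hj) : ℤ) : ZMod 3) := by
        intro i
        induction i with
        | zero =>
          intro hi
          exact hodd j hj hj2
        | succ i ih =>
          intro hi
          have hlt : i < m := by omega
          have ha : i + 1 < m := hi
          have hjn : j < n := by omega
          have h0 := ih hlt
          have h2 := hrow i j ha hjn
          have h3 := hrow i (j + 1) ha hj
          obtain ⟨hsum, hne⟩ := hval i j ha hj
          have hb' : (j + 1) % 2 = 0 := by omega
          rw [if_pos hb'] at hne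
          have hint : μ (Crease.H (i + 1) j ha hj) =
              μ (.H i j (by omega : i < m) hj) + μ (.V i (j + 1) ha hj) +
                μ (.V i j ha hjn) :=
            miura_key2 _ _ _ _ (hmv _) (hmv _) (hmv _) (hmv _) hsum hne
          have hint3 : ((μ (Crease.H (i + 1) j ha hj) : ℤ) : ZMod 3) =
              ((μ (.H i j (by omega : i < m) hj) : ℤ) : ZMod 3) +
              ((μ (.V i (j + 1) ha hj) : ℤ) : ZMod 3) +
              ((μ (.V i j ha hjn) : ℤ) : ZMod 3) := by
            exact_mod_cast congrArg (fun z : ℤ => (z : ZMod 3)) hint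
          have hjne : ¬ (j % 2 = 0) := by omega
          rw [if_neg hjne] at h2
          rw [if_pos hb'] at h3
          linear_combination h3 + h0 - h2 - hint3
      exact main i hi
  refine ⟨horiz, ?_⟩
  intro e
  cases e with
  | V i j h1 h2 =>
    have h := hrow i j h1 h2
    have hz := miura_cast_ne_zero _ (hmv (Crease.V i j h1 h2))
    simp only [faceA, faceB]
    intro heq
    apply hz
    split_ifs at h with hj2
    · linear_combination -h - heq
    · linear_combination h + heq
  | H i j h1 h2 =>
    have h := horiz i j h1 h2
    have hz := miura_cast_ne_zero _ (hmv (Crease.H i j h1 h2))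
    simp only [faceA, faceB]
    intro heq
    apply hz
    linear_combination -h - heq
end

section
/- Let m, n ≥ 1 and let μ and μ′ be Miura-locally-valid MV assignments of the m×n Miura-ori such that the associated colorings c_μ and c_{μ′} differ at exactly one face F. Then μ′ = μ_F, the face flip of μ at F. -/
lemma zmod3_pm {x y : ℤ} (hx : x = 1 ∨ x = -1) (hy : y = 1 ∨ y = -1) :
    (((y : ZMod 3) = (x : ZMod 3)) → y = x) ∧ (((y : ZMod 3) ≠ (x : ZMod 3)) → y = -x) := by
  rcases hx with rfl | rfl <;> rcases hy with rfl | rfl <;>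
    constructor <;> intro h <;> push_cast at h <;> revert h <;> decide

lemma zmod3_key {x y : ℤ} (hx : x = 1 ∨ x = -1) (hy : y = 1 ∨ y = -1)
    (A B A' B' : ZMod 3) (hB : B = A + (x : ZMod 3)) (hB' : B' = A' + (y : ZMod 3)) :
    (A' = A → B' = B → y = x) ∧ (A' ≠ A → B' = B → y = -x) ∧ (A' = A → B' ≠ B → y = -x) := by
  refine ⟨?_, ?_, ?_⟩
  · intro h1 h2
    apply (zmod3_pm hx hy).1
    have h3 : A + (y : ZMod 3) = A + (x : ZMod 3) := by rw [← hB, ← h2, hB', h1]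
    exact add_left_cancel h3
  · intro h1 h2
    apply (zmod3_pm hx hy).2
    intro hxy
    apply h1
    have h3 : A' + (y : ZMod 3) = A + (y : ZMod 3) := by rw [← hB', h2, hB, hxy]
    exact add_right_cancel h3
  · intro h1 h2
    apply (zmod3_pm hx hy).2
    intro hxy
    apply h2
    rw [hB', hB, h1, hxy]

lemma borders5 {m n : ℕ} (f1 f2 a b : ℕ) (ha : a + 1 < m) (hb : b + 1 < n)
    (hb0 : b < n) (ham : a < m) :
    (¬ Borders (f1,f2) (Crease.V a b ha hb0) ∧ ¬ Borders (f1,f2) (Crease.V a (b+1) ha hb) ∧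
      ¬ Borders (f1,f2) (Crease.H a b ham hb) ∧ ¬ Borders (f1,f2) (Crease.H (a+1) b ha hb)) ∨
    (Borders (f1,f2) (Crease.V a b ha hb0) ∧ ¬ Borders (f1,f2) (Crease.V a (b+1) ha hb) ∧
      Borders (f1,f2) (Crease.H a b ham hb) ∧ ¬ Borders (f1,f2) (Crease.H (a+1) b ha hb)) ∨
    (Borders (f1,f2) (Crease.V a b ha hb0) ∧ ¬ Borders (f1,f2) (Crease.V a (b+1) ha hb) ∧
      ¬ Borders (f1,f2) (Crease.H a b ham hb) ∧ Borders (f1,f2) (Crease.H (a+1) b ha hb)) ∨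
    (¬ Borders (f1,f2) (Crease.V a b ha hb0) ∧ Borders (f1,f2) (Crease.V a (b+1) ha hb) ∧
      Borders (f1,f2) (Crease.H a b ham hb) ∧ ¬ Borders (f1,f2) (Crease.H (a+1) b ha hb)) ∨
    (¬ Borders (f1,f2) (Crease.V a b ha hb0) ∧ Borders (f1,f2) (Crease.V a (b+1) ha hb) ∧
      ¬ Borders (f1,f2) (Crease.H a b ham hb) ∧ Borders (f1,f2) (Crease.H (a+1) b ha hb)) := by
  simp only [Borders]
  by_cases h3 : f2 = b
  · subst h3
    by_cases h1 : f1 = a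
    · subst h1
      refine Or.inr (Or.inl ⟨Or.inl rfl, ?_, Or.inl rfl, ?_⟩) <;>
        (rintro (hc | hc) <;> (rw [Prod.mk.injEq] at hc; omega))
    · by_cases h2 : f1 = a + 1
      · subst h2
        refine Or.inr (Or.inr (Or.inl ⟨Or.inr rfl, ?_, ?_, Or.inl rfl⟩)) <;>
          (rintro (hc | hc) <;> (rw [Prod.mk.injEq] at hc; omega))
      · refine Or.inl ⟨?_, ?_, ?_, ?_⟩ <;>
          (rintro (hc | hc) <;> (rw [Prod.mk.injEq] at hc; omega))
  · by_cases h4 : f2 = b + 1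
    · subst h4
      by_cases h1 : f1 = a
      · subst h1
        refine Or.inr (Or.inr (Or.inr (Or.inl ⟨?_, Or.inl rfl, Or.inr rfl, ?_⟩))) <;>
          (rintro (hc | hc) <;> (rw [Prod.mk.injEq] at hc; omega))
      · by_cases h2 : f1 = a + 1
        · subst h2
          refine Or.inr (Or.inr (Or.inr (Or.inr ⟨?_, Or.inr rfl, ?_, Or.inr rfl⟩))) <;>
            (rintro (hc | hc) <;> (rw [Prod.mk.injEq] at hc; omega))
        · refine Or.inl ⟨?_, ?_, ?_, ?_⟩ <;>
            (rintro (hc | hc) <;> (rw [Prod.mk.injEq] at hc; omega))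
    · refine Or.inl ⟨?_, ?_, ?_, ?_⟩ <;>
        (rintro (hc | hc) <;> (rw [Prod.mk.injEq] at hc; omega))

lemma step_even {m n : ℕ} (μ μ' : Crease m n → ℤ) (hmv : IsMV μ) (hmv' : IsMV μ')
    (hval : MiuraLocallyValid μ) (hval' : MiuraLocallyValid μ')
    (f1 f2 a b : ℕ) (ha : a + 1 < m) (hb : b + 1 < n) (hbe : b % 2 = 0)
    (hb0 : b < n) (ham : a < m)
    (hV1 : μ' (Crease.V a b ha hb0) = faceFlip μ (f1, f2) (Crease.V a b ha hb0))
    (hV2 : μ' (Crease.V a (b+1) ha hb) = faceFlip μ (f1, f2) (Crease.V a (b+1) ha hb))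
    (hnear : μ' (Crease.H (a+1) b ha hb) = faceFlip μ (f1, f2) (Crease.H (a+1) b ha hb)) :
    μ' (Crease.H a b ham hb) = faceFlip μ (f1, f2) (Crease.H a b ham hb) := by
  have hs1 : μ (Crease.V a b ha hb0) + μ (Crease.V a (b+1) ha hb) +
      μ (Crease.H a b ham hb) + μ (Crease.H (a+1) b ha hb) = 2 ∨
      μ (Crease.V a b ha hb0) + μ (Crease.V a (b+1) ha hb) +
      μ (Crease.H a b ham hb) + μ (Crease.H (a+1) b ha hb) = -2 := (hval a b ha hb).1
  have hs1' : μ' (Crease.V a b ha hb0) + μ' (Crease.V a (b+1) ha hb) +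
      μ' (Crease.H a b ham hb) + μ' (Crease.H (a+1) b ha hb) = 2 ∨
      μ' (Crease.V a b ha hb0) + μ' (Crease.V a (b+1) ha hb) +
      μ' (Crease.H a b ham hb) + μ' (Crease.H (a+1) b ha hb) = -2 := (hval' a b ha hb).1
  have hs2 : ¬ (μ (Crease.V a b ha hb0) = μ (Crease.V a (b+1) ha hb) ∧
      μ (Crease.V a (b+1) ha hb) = μ (Crease.H (a+1) b ha hb)) := by
    have h := (hval a b ha hb).2
    rw [if_neg (by omega : ¬ (b+1) % 2 = 0)] at h
    exact h
  have hs2' : ¬ (μ' (Crease.V a b ha hb0) = μ' (Crease.V a (b+1) ha hb) ∧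
      μ' (Crease.V a (b+1) ha hb) = μ' (Crease.H (a+1) b ha hb)) := by
    have h := (hval' a b ha hb).2
    rw [if_neg (by omega : ¬ (b+1) % 2 = 0)] at h
    exact h
  have m1 := hmv (Crease.V a b ha hb0)
  have m2 := hmv (Crease.V a (b+1) ha hb)
  have m3 := hmv (Crease.H a b ham hb)
  have m4 := hmv (Crease.H (a+1) b ha hb)
  have m3' := hmv' (Crease.H a b ham hb)
  simp only [faceFlip] at hV1 hV2 hnear ⊢
  rcases borders5 f1 f2 a b ha hb hb0 ham with
      ⟨B1, B2, B3, B4⟩ | ⟨B1, B2, B3, B4⟩ | ⟨B1, B2, B3, B4⟩ | ⟨B1, B2, B3, B4⟩ | ⟨B1, B2, B3, B4⟩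
  · rw [if_neg B1] at hV1; rw [if_neg B2] at hV2; rw [if_neg B4] at hnear
    rw [if_neg B3]; omega
  · rw [if_pos B1] at hV1; rw [if_neg B2] at hV2; rw [if_neg B4] at hnear
    rw [if_pos B3]; omega
  · rw [if_pos B1] at hV1; rw [if_neg B2] at hV2; rw [if_pos B4] at hnear
    rw [if_neg B3]; omega
  · rw [if_neg B1] at hV1; rw [if_pos B2] at hV2; rw [if_neg B4] at hnear
    rw [if_pos B3]; omega
  · rw [if_neg B1] at hV1; rw [if_pos B2] at hV2; rw [if_pos B4] at hnear
    rw [if_neg B3]; omega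

lemma step_odd {m n : ℕ} (μ μ' : Crease m n → ℤ) (hmv : IsMV μ) (hmv' : IsMV μ')
    (hval : MiuraLocallyValid μ) (hval' : MiuraLocallyValid μ')
    (f1 f2 a b : ℕ) (ha : a + 1 < m) (hb : b + 1 < n) (hbo : b % 2 = 1)
    (hb0 : b < n) (ham : a < m)
    (hV1 : μ' (Crease.V a b ha hb0) = faceFlip μ (f1, f2) (Crease.V a b ha hb0))
    (hV2 : μ' (Crease.V a (b+1) ha hb) = faceFlip μ (f1, f2) (Crease.V a (b+1) ha hb))
    (hnear : μ' (Crease.H a b ham hb) = faceFlip μ (f1, f2) (Crease.H a b ham hb)) :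
    μ' (Crease.H (a+1) b ha hb) = faceFlip μ (f1, f2) (Crease.H (a+1) b ha hb) := by
  have hs1 : μ (Crease.V a b ha hb0) + μ (Crease.V a (b+1) ha hb) +
      μ (Crease.H a b ham hb) + μ (Crease.H (a+1) b ha hb) = 2 ∨
      μ (Crease.V a b ha hb0) + μ (Crease.V a (b+1) ha hb) +
      μ (Crease.H a b ham hb) + μ (Crease.H (a+1) b ha hb) = -2 := (hval a b ha hb).1
  have hs1' : μ' (Crease.V a b ha hb0) + μ' (Crease.V a (b+1) ha hb) +
      μ' (Crease.H a b ham hb) + μ' (Crease.H (a+1) b ha hb) = 2 ∨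
      μ' (Crease.V a b ha hb0) + μ' (Crease.V a (b+1) ha hb) +
      μ' (Crease.H a b ham hb) + μ' (Crease.H (a+1) b ha hb) = -2 := (hval' a b ha hb).1
  have hs2 : ¬ (μ (Crease.V a b ha hb0) = μ (Crease.V a (b+1) ha hb) ∧
      μ (Crease.V a (b+1) ha hb) = μ (Crease.H a b ham hb)) := by
    have h := (hval a b ha hb).2
    rw [if_pos (by omega : (b+1) % 2 = 0)] at h
    exact h
  have hs2' : ¬ (μ' (Crease.V a b ha hb0) = μ' (Crease.V a (b+1) ha hb) ∧
      μ' (Crease.V a (b+1) ha hb) = μ' (Crease.H a b ham hb)) := by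
    have h := (hval' a b ha hb).2
    rw [if_pos (by omega : (b+1) % 2 = 0)] at h
    exact h
  have m1 := hmv (Crease.V a b ha hb0)
  have m2 := hmv (Crease.V a (b+1) ha hb)
  have m3 := hmv (Crease.H a b ham hb)
  have m4 := hmv (Crease.H (a+1) b ha hb)
  have m4' := hmv' (Crease.H (a+1) b ha hb)
  simp only [faceFlip] at hV1 hV2 hnear ⊢
  rcases borders5 f1 f2 a b ha hb hb0 ham with
      ⟨B1, B2, B3, B4⟩ | ⟨B1, B2, B3, B4⟩ | ⟨B1, B2, B3, B4⟩ | ⟨B1, B2, B3, B4⟩ | ⟨B1, B2, B3, B4⟩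
  · rw [if_neg B1] at hV1; rw [if_neg B2] at hV2; rw [if_neg B3] at hnear
    rw [if_neg B4]; omega
  · rw [if_pos B1] at hV1; rw [if_neg B2] at hV2; rw [if_pos B3] at hnear
    rw [if_neg B4]; omega
  · rw [if_pos B1] at hV1; rw [if_neg B2] at hV2; rw [if_neg B3] at hnear
    rw [if_pos B4]; omega
  · rw [if_neg B1] at hV1; rw [if_pos B2] at hV2; rw [if_pos B3] at hnear
    rw [if_neg B4]; omega
  · rw [if_neg B1] at hV1; rw [if_pos B2] at hV2; rw [if_neg B3] at hnear
    rw [if_pos B4]; omega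

set_option maxHeartbeats 2000000 in
/-- If two Miura-locally-valid MV assignments have associated colorings differing at
exactly one face `F`, then one is the face flip of the other at `F`. -/
theorem miura_one_recolor_is_flip (m n : ℕ) (hm : 1 ≤ m) (hn : 1 ≤ n)
    (μ μ' : Crease m n → ℤ) (hmv : IsMV μ) (hmv' : IsMV μ')
    (hval : MiuraLocallyValid μ) (hval' : MiuraLocallyValid μ')
    (c c' : ℕ × ℕ → ZMod 3)
    (hc : IsAssocColoring m n hm μ c) (hc' : IsAssocColoring m n hm μ' c')
    (F : ℕ × ℕ) (hF : F ∈ Faces m n)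
    (hdiff : c' F ≠ c F) (hagree : ∀ G ∈ Faces m n, G ≠ F → c' G = c G) :
    μ' = faceFlip μ F := by
  obtain ⟨c0, cV, cHe, cHo⟩ := hc
  obtain ⟨c0', cV', cHe', cHo'⟩ := hc'
  have memF : ∀ i j : ℕ, i < m → j < n → ((i, j) : ℕ × ℕ) ∈ Faces m n := by
    intro i j hi hj
    simp only [Faces, Finset.mem_product, Finset.mem_range]
    exact ⟨hi, hj⟩
  -- generic lemma handling which side of an edge F lies on
  have edge : ∀ (A B : ℕ × ℕ) (x y : ℤ),
      A ∈ Faces m n → B ∈ Faces m n → A ≠ B →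
      (c' A = c A → c' B = c B → y = x) →
      (c' A ≠ c A → c' B = c B → y = -x) →
      (c' A = c A → c' B ≠ c B → y = -x) →
      ((F ≠ A → F ≠ B → y = x) ∧ (F = A → y = -x) ∧ (F = B → y = -x)) := by
    intro A B x y hA hB hAB k1 k2 k3
    refine ⟨?_, ?_, ?_⟩
    · intro n1 n2
      exact k1 (hagree A hA (fun h => n1 h.symm)) (hagree B hB (fun h => n2 h.symm))
    · intro hFA
      refine k2 (hFA ▸ hdiff) (hagree B hB (fun h => hAB (hFA.symm.trans h.symm)))
    · intro hFB
      refine k3 (hagree A hA (fun h => hAB (h.trans hFB))) (hFB ▸ hdiff)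
  -- vertical creases
  have vert : ∀ i j (hi : i + 1 < m) (hj : j < n),
      μ' (Crease.V i j hi hj) = faceFlip μ F (Crease.V i j hi hj) := by
    intro i j hi hj
    have hx := hmv (Crease.V i j hi hj)
    have hy := hmv' (Crease.V i j hi hj)
    have h1 := cV i j hi hj
    have h1' := cV' i j hi hj
    have hmem1 := memF i j (by omega) hj
    have hmem2 := memF (i+1) j (by omega) hj
    have hAB : ((i, j) : ℕ × ℕ) ≠ (i+1, j) := by
      simp only [Prod.mk.injEq, ne_eq, not_and]; omega
    have hks : (c' (i, j) = c (i, j) → c' (i+1, j) = c (i+1, j) →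
          μ' (Crease.V i j hi hj) = μ (Crease.V i j hi hj)) ∧
        (c' (i, j) ≠ c (i, j) → c' (i+1, j) = c (i+1, j) →
          μ' (Crease.V i j hi hj) = -μ (Crease.V i j hi hj)) ∧
        (c' (i, j) = c (i, j) → c' (i+1, j) ≠ c (i+1, j) →
          μ' (Crease.V i j hi hj) = -μ (Crease.V i j hi hj)) := by
      rcases Nat.mod_two_eq_zero_or_one j with hp | hp
      · rw [if_pos hp] at h1 h1'
        exact zmod3_key hx hy _ _ _ _ h1 h1'
      · rw [if_neg (by omega : ¬ j % 2 = 0), ← Int.cast_neg] at h1 h1'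
        obtain ⟨k1, k2, k3⟩ := zmod3_key (x := -μ (Crease.V i j hi hj))
          (y := -μ' (Crease.V i j hi hj)) (by omega) (by omega) _ _ _ _ h1 h1'
        refine ⟨fun a b => by have := k1 a b; omega,
          fun a b => by have := k2 a b; omega,
          fun a b => by have := k3 a b; omega⟩
    obtain ⟨q1, q2, q3⟩ := edge (i, j) (i+1, j) _ _ hmem1 hmem2 hAB hks.1 hks.2.1 hks.2.2
    by_cases p1 : F = (i, j)
    · have hb : Borders F (Crease.V i j hi hj) := Or.inl p1
      simp only [faceFlip, if_pos hb]
      exact q2 p1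
    · by_cases p2 : F = (i+1, j)
      · have hb : Borders F (Crease.V i j hi hj) := Or.inr p2
        simp only [faceFlip, if_pos hb]
        exact q3 p2
      · have hb : ¬ Borders F (Crease.V i j hi hj) := fun h => h.elim p1 p2
        simp only [faceFlip, if_neg hb]
        exact q1 p1 p2
  -- chain horizontal creases, even rows
  have chainE : ∀ j (hj : j + 1 < n), j % 2 = 0 →
      ∀ hi : m - 1 < m,
      μ' (Crease.H (m-1) j hi hj) = faceFlip μ F (Crease.H (m-1) j hi hj) := by
    intro j hj hje hi
    have hx := hmv (Crease.H (m-1) j hi hj)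
    have hy := hmv' (Crease.H (m-1) j hi hj)
    have h1 : c (m-1, j+1) = c (m-1, j) + ((μ (Crease.H (m-1) j hi hj) : ℤ) : ZMod 3) :=
      cHe j hj hje
    have h1' : c' (m-1, j+1) = c' (m-1, j) + ((μ' (Crease.H (m-1) j hi hj) : ℤ) : ZMod 3) :=
      cHe' j hj hje
    have hmem1 := memF (m-1) j (by omega) (by omega)
    have hmem2 := memF (m-1) (j+1) (by omega) hj
    have hAB : ((m-1, j) : ℕ × ℕ) ≠ (m-1, j+1) := by
      simp only [Prod.mk.injEq, ne_eq, not_and]; omega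
    obtain ⟨k1, k2, k3⟩ := zmod3_key hx hy _ _ _ _ h1 h1'
    obtain ⟨q1, q2, q3⟩ := edge (m-1, j) (m-1, j+1) _ _ hmem1 hmem2 hAB k1 k2 k3
    by_cases p1 : F = (m-1, j)
    · have hb : Borders F (Crease.H (m-1) j hi hj) := Or.inl p1
      simp only [faceFlip, if_pos hb]
      exact q2 p1
    · by_cases p2 : F = (m-1, j+1)
      · have hb : Borders F (Crease.H (m-1) j hi hj) := Or.inr p2
        simp only [faceFlip, if_pos hb]
        exact q3 p2
      · have hb : ¬ Borders F (Crease.H (m-1) j hi hj) := fun h => h.elim p1 p2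
        simp only [faceFlip, if_neg hb]
        exact q1 p1 p2
  -- chain horizontal creases, odd rows
  have chainO : ∀ j (hj : j + 1 < n), j % 2 = 1 →
      ∀ hi : 0 < m,
      μ' (Crease.H 0 j hi hj) = faceFlip μ F (Crease.H 0 j hi hj) := by
    intro j hj hjo hi
    have hx := hmv (Crease.H 0 j hi hj)
    have hy := hmv' (Crease.H 0 j hi hj)
    have h1 : c (0, j+1) = c (0, j) + ((μ (Crease.H 0 j hi hj) : ℤ) : ZMod 3) :=
      cHo j hj hjo
    have h1' : c' (0, j+1) = c' (0, j) + ((μ' (Crease.H 0 j hi hj) : ℤ) : ZMod 3) :=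
      cHo' j hj hjo
    have hmem1 := memF 0 j (by omega) (by omega)
    have hmem2 := memF 0 (j+1) (by omega) hj
    have hAB : ((0, j) : ℕ × ℕ) ≠ (0, j+1) := by
      simp only [Prod.mk.injEq, ne_eq, not_and]; omega
    obtain ⟨k1, k2, k3⟩ := zmod3_key hx hy _ _ _ _ h1 h1'
    obtain ⟨q1, q2, q3⟩ := edge (0, j) (0, j+1) _ _ hmem1 hmem2 hAB k1 k2 k3
    by_cases p1 : F = (0, j)
    · have hb : Borders F (Crease.H 0 j hi hj) := Or.inl p1
      simp only [faceFlip, if_pos hb]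
      exact q2 p1
    · by_cases p2 : F = (0, j+1)
      · have hb : Borders F (Crease.H 0 j hi hj) := Or.inr p2
        simp only [faceFlip, if_pos hb]
        exact q3 p2
      · have hb : ¬ Borders F (Crease.H 0 j hi hj) := fun h => h.elim p1 p2
        simp only [faceFlip, if_neg hb]
        exact q1 p1 p2
  obtain ⟨f1, f2⟩ := F
  funext e
  cases e with
  | V i j hi hj => exact vert i j hi hj
  | H i j hi hj =>
    rcases Nat.mod_two_eq_zero_or_one j with hp | hp
    · have main : ∀ d i, i + d = m - 1 → ∀ hi : i < m,
          μ' (Crease.H i j hi hj) = faceFlip μ (f1, f2) (Crease.H i j hi hj) := by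
        intro d
        induction d with
        | zero =>
          intro i hid hi
          have : i = m - 1 := by omega
          subst this
          exact chainE j hj hp hi
        | succ d ih =>
          intro i hid hi
          have ha : i + 1 < m := by omega
          exact step_even μ μ' hmv hmv' hval hval' f1 f2 i j ha hj hp (by omega) hi
            (vert i j ha (by omega)) (vert i (j+1) ha hj) (ih (i+1) (by omega) (by omega))
      exact main (m - 1 - i) i (by omega) hi
    · have main : ∀ i, ∀ hi : i < m,
          μ' (Crease.H i j hi hj) = faceFlip μ (f1, f2) (Crease.H i j hi hj) := by
        intro i
        induction i with
        | zero => intro hi; exact chainO j hj hp hi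
        | succ i ih =>
          intro hi
          exact step_odd μ μ' hmv hmv' hval hval' f1 f2 i j hi hj hp (by omega) (by omega)
            (vert i j hi (by omega)) (vert i (j+1) hi hj) (ih (by omega))
      exact main i hi
end

section
/- Let m, n ≥ 1. The map μ ↦ c_μ is injective on Miura-locally-valid MV assignments of the m×n Miura-ori: if μ and μ′ are Miura-locally-valid and c_μ = c_{μ′}, then μ = μ′. -/
/-- Auxiliary: horizontal creases with equal indices are equal (proof irrelevance). -/
theorem Hcast {m n : ℕ} {i i' b : ℕ} (h : i = i') (p : i < m) (p' : i' < m)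
    (q : b + 1 < n) : (Crease.H i b p q : Crease m n) = .H i' b p' q := by
  subst h; rfl

/-- The associated coloring determines a Miura-locally-valid MV assignment: if the
associated colorings of `μ` and `μ'` agree on every face, then `μ = μ'`. -/
theorem miura_coloring_injective (m n : ℕ) (hm : 1 ≤ m) (hn : 1 ≤ n)
    (μ μ' : Crease m n → ℤ) (hmv : IsMV μ) (hmv' : IsMV μ')
    (hval : MiuraLocallyValid μ) (hval' : MiuraLocallyValid μ')
    (c c' : ℕ × ℕ → ZMod 3)
    (hc : IsAssocColoring m n hm μ c) (hc' : IsAssocColoring m n hm μ' c')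
    (hagree : ∀ G ∈ Faces m n, c G = c' G) :
    μ = μ' := by
  obtain ⟨h0, hVstep, hHeven, hHodd⟩ := hc
  obtain ⟨h0', hVstep', hHeven', hHodd'⟩ := hc'
  have hmem : ∀ i j : ℕ, i < m → j < n → (i, j) ∈ Faces m n := by
    intro i j hi hj; simp [Faces, hi, hj]
  have key : ∀ x y : ℤ, (x = 1 ∨ x = -1) → (y = 1 ∨ y = -1) →
      ((x : ZMod 3) = (y : ZMod 3)) → x = y := by
    intro x y hx hy h
    rcases hx with rfl | rfl <;> rcases hy with rfl | rfl <;>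
      first | rfl | (exfalso; revert h; decide)
  -- vertical creases agree
  have hV : ∀ i j (hi : i + 1 < m) (hj : j < n),
      μ (.V i j hi hj) = μ' (.V i j hi hj) := by
    intro i j hi hj
    have e1 := hVstep i j hi hj
    have e2 := hVstep' i j hi hj
    rw [hagree (i, j) (hmem i j (by omega) hj)] at e1
    rw [hagree (i + 1, j) (hmem (i + 1) j hi hj)] at e1
    rw [e2] at e1
    have ht := add_left_cancel e1
    by_cases hp : j % 2 = 0
    · simp only [hp, if_true] at ht
      exact (key _ _ (hmv' _) (hmv _) ht).symm
    · simp only [hp, if_false] at ht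
      exact (key _ _ (hmv' _) (hmv _) (neg_injective ht)).symm
  -- one step of horizontal propagation
  have hstep : ∀ a b (ha : a + 1 < m) (hb : b + 1 < n),
      (μ (.H a b (by omega) hb) = μ' (.H a b (by omega) hb) ↔
        μ (.H (a + 1) b ha hb) = μ' (.H (a + 1) b ha hb)) := by
    intro a b ha hb
    have s := (hval a b ha hb).1
    have s' := (hval' a b ha hb).1
    have e1 := hV a b ha (by omega)
    have e2 := hV a (b + 1) ha hb
    have m1 := hmv (.H a b (by omega) hb)
    have m2 := hmv (.H (a + 1) b ha hb)
    have m1' := hmv' (.H a b (by omega) hb)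
    have m2' := hmv' (.H (a + 1) b ha hb)
    constructor <;> intro h <;> omega
  -- all horizontal creases agree
  have hH : ∀ b (hb : b + 1 < n) i (hi : i < m),
      μ (.H i b hi hb) = μ' (.H i b hi hb) := by
    intro b hb
    by_cases hp : b % 2 = 0
    · -- base at i = m - 1, descend
      have hm1 : m - 1 < m := by omega
      have base : μ (.H (m - 1) b hm1 hb) = μ' (.H (m - 1) b hm1 hb) := by
        have e1 := hHeven b hb hp
        have e2 := hHeven' b hb hp
        rw [hagree (m - 1, b + 1) (hmem _ _ (by omega) hb)] at e1
        rw [hagree (m - 1, b) (hmem _ _ (by omega) (by omega))] at e1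
        rw [e2] at e1
        exact (key _ _ (hmv' _) (hmv _) (add_left_cancel e1)).symm
      have down : ∀ k, ∀ p : m - 1 - k < m,
          μ (.H (m - 1 - k) b p hb) = μ' (.H (m - 1 - k) b p hb) := by
        intro k
        induction k with
        | zero => intro p; exact base
        | succ k ih =>
          intro p
          rcases Nat.lt_or_ge (k + 1) m with hkm | hkm
          · have ha : m - 1 - (k + 1) + 1 < m := by omega
            have hidx : m - 1 - (k + 1) + 1 = m - 1 - k := by omega
            have h2 : μ (.H (m - 1 - (k + 1) + 1) b ha hb) =
                μ' (.H (m - 1 - (k + 1) + 1) b ha hb) := by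
              rw [Hcast hidx ha (by omega) hb]; exact ih (by omega)
            exact (hstep (m - 1 - (k + 1)) b ha hb).2 h2
          · have hidx : m - 1 - (k + 1) = m - 1 - k := by omega
            rw [Hcast hidx p (by omega) hb]
            exact ih (by omega)
      intro i hi
      have hidx : m - 1 - (m - 1 - i) = i := by omega
      have := down (m - 1 - i) (by omega)
      rwa [Hcast hidx (by omega) hi hb] at this
    · -- base at i = 0, ascend
      have hp1 : b % 2 = 1 := by omega
      have base : μ (.H 0 b (by omega) hb) = μ' (.H 0 b (by omega) hb) := by
        have e1 := hHodd b hb hp1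
        have e2 := hHodd' b hb hp1
        rw [hagree (0, b + 1) (hmem _ _ (by omega) hb)] at e1
        rw [hagree (0, b) (hmem _ _ (by omega) (by omega))] at e1
        rw [e2] at e1
        exact (key _ _ (hmv' _) (hmv _) (add_left_cancel e1)).symm
      intro i
      induction i with
      | zero => intro hi; exact base
      | succ i ih =>
        intro hi
        exact (hstep i b hi hb).1 (ih (by omega))
  funext e
  cases e with
  | V i j hi hj => exact hV i j hi hj
  | H i b hi hb => exact hH b hb i hi
end

section
/- Let 1 ≤ m ≤ n and let μ_1, μ_2 be two Miura-locally-valid MV assignments of the m×n Miura-ori. Then μ_1 can be transformed into μ_2 by a sequence of at most 2mn² single face flips in which every intermediate MV assignment is Miura-locally-valid. -/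
section

variable {m n : ℕ} {h h₁ h₂ : ℕ × ℕ → ℤ} {μ : Crease m n → ℤ} {p : ℕ × ℕ} {ε : ℤ}

lemma borders_iff {F : ℕ × ℕ} {e : Crease m n} : Borders F e ↔ F = faceA e ∨ F = faceB e := by
  cases e <;> rfl

lemma faceA_ne_faceB (e : Crease m n) : faceA e ≠ faceB e := by
  cases e <;> simp [faceA, faceB]

lemma mem_faces : p ∈ Faces m n ↔ p.1 < m ∧ p.2 < n := by
  simp [Faces]

lemma faceA_mem_faces (e : Crease m n) : faceA e ∈ Faces m n := by
  cases e <;> simp only [faceA, mem_faces] <;> omega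

lemma faceB_mem_faces (e : Crease m n) : faceB e ∈ Faces m n := by
  cases e <;> simp only [faceB, mem_faces] <;> omega

lemma IsMV.faceFlip (hμ : IsMV μ) (F : ℕ × ℕ) : IsMV (faceFlip μ F) := by
  intro e
  unfold _root_.faceFlip
  split_ifs <;> have := hμ e <;> omega

def IsHeight (m n : ℕ) (h : ℕ × ℕ → ℤ) : Prop :=
  ∀ e : Crease m n, h (faceB e) - h (faceA e) = 1 ∨ h (faceB e) - h (faceA e) = -1

def creaseSign : Crease m n → ℤ
  | .V _ j _ _ => (-1) ^ j
  | .H _ _ _ _ => 1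

lemma creaseSign_eq_or (e : Crease m n) : creaseSign e = 1 ∨ creaseSign e = -1 := by
  cases e
  · exact neg_one_pow_eq_or ℤ _
  · exact Or.inl rfl

def mvOfHeight (m n : ℕ) (h : ℕ × ℕ → ℤ) (e : Crease m n) : ℤ :=
  creaseSign e * (h (faceB e) - h (faceA e))

lemma mvOfHeight_V {i j : ℕ} (hi : i + 1 < m) (hj : j < n) :
    mvOfHeight m n h (.V i j hi hj) = (-1) ^ j * (h (i + 1, j) - h (i, j)) := rfl

lemma mvOfHeight_H {i j : ℕ} (hi : i < m) (hj : j + 1 < n) :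
    mvOfHeight m n h (.H i j hi hj) = h (i, j + 1) - h (i, j) := by
  simp [mvOfHeight, creaseSign, faceA, faceB]

lemma isHeight_iff_isMV : IsHeight m n h ↔ IsMV (mvOfHeight m n h) := by
  refine forall_congr' fun e => ?_
  rcases creaseSign_eq_or e with hs | hs <;> simp only [mvOfHeight, hs] <;> omega

lemma IsHeight.step_fst (hh : IsHeight m n h) {i j : ℕ} (hi : i + 1 < m) (hj : j < n) :
    h (i + 1, j) - h (i, j) = 1 ∨ h (i + 1, j) - h (i, j) = -1 :=
  hh (.V i j hi hj)

lemma IsHeight.step_snd (hh : IsHeight m n h) {i j : ℕ} (hi : i < m) (hj : j + 1 < n) :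
    h (i, j + 1) - h (i, j) = 1 ∨ h (i, j + 1) - h (i, j) = -1 :=
  hh (.H i j hi hj)

lemma IsHeight.neg (hh : IsHeight m n h) : IsHeight m n (-h) := by
  intro e
  have := hh e
  simp only [Pi.neg_apply]
  omega

lemma miuraLocallyValid_mvOfHeight (hh : IsHeight m n h) :
    MiuraLocallyValid (mvOfHeight m n h) := by
  intro a b ha hb
  have s₁ := hh.step_fst ha (j := b) (by omega)
  have s₂ := hh.step_fst ha hb
  have s₃ := hh.step_snd (i := a) (by omega) hb
  have s₄ := hh.step_snd ha hb
  simp only [mvOfHeight_V, mvOfHeight_H]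
  rcases Nat.even_or_odd b with hb' | hb'
  · rw [if_neg (by have := Nat.even_iff.mp hb'; omega), hb'.neg_one_pow,
      hb'.add_one.neg_one_pow, mvOfHeight_H]
    omega
  · rw [if_pos (by have := Nat.odd_iff.mp hb'; omega), hb'.neg_one_pow,
      hb'.add_one.neg_one_pow, mvOfHeight_H]
    omega

lemma mvOfHeight_congr (heq : ∀ p ∈ Faces m n, h₁ p = h₂ p) :
    mvOfHeight m n h₁ = mvOfHeight m n h₂ := by
  funext e
  simp only [mvOfHeight, heq _ (faceA_mem_faces e), heq _ (faceB_mem_faces e)]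

def vstep (μ : Crease m n → ℤ) (i j : ℕ) : ℤ :=
  if hij : i + 1 < m ∧ j < n then (-1) ^ j * μ (.V i j hij.1 hij.2) else 0

def hstep (μ : Crease m n → ℤ) (i j : ℕ) : ℤ :=
  if hij : i < m ∧ j + 1 < n then μ (.H i j hij.1 hij.2) else 0

lemma vstep_add_hstep (hμ : IsMV μ) (hval : MiuraLocallyValid μ) {a b : ℕ} (ha : a + 1 < m)
    (hb : b + 1 < n) :
    vstep μ a b + hstep μ (a + 1) b = hstep μ a b + vstep μ a (b + 1) := by
  simp only [vstep, hstep, dif_pos (And.intro ha hb), dif_pos (And.intro ha (by omega : b < n)),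
    dif_pos (And.intro (by omega : a < m) hb)]
  have e₁ := hμ (.V a b ha (by omega))
  have e₂ := hμ (.V a (b + 1) ha hb)
  have e₃ := hμ (.H a b (by omega) hb)
  have e₄ := hμ (.H (a + 1) b ha hb)
  have hv := hval a b ha hb
  rcases Nat.even_or_odd b with hb' | hb'
  · rw [if_neg (by have := Nat.even_iff.mp hb'; omega)] at hv
    rw [hb'.neg_one_pow, hb'.add_one.neg_one_pow]
    omega
  · rw [if_pos (by have := Nat.odd_iff.mp hb'; omega)] at hv
    rw [hb'.neg_one_pow, hb'.add_one.neg_one_pow]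
    omega

def heightOf (μ : Crease m n → ℤ) (p : ℕ × ℕ) : ℤ :=
  ∑ k ∈ Finset.range p.2, hstep μ 0 k + ∑ k ∈ Finset.range p.1, vstep μ k p.2

lemma heightOf_succ_fst (i j : ℕ) :
    heightOf μ (i + 1, j) = heightOf μ (i, j) + vstep μ i j := by
  simp only [heightOf, Finset.sum_range_succ, add_assoc]

lemma heightOf_succ_snd (hμ : IsMV μ) (hval : MiuraLocallyValid μ)
    {i j : ℕ} (hi : i < m) (hj : j + 1 < n) :
    heightOf μ (i, j + 1) = heightOf μ (i, j) + hstep μ i j := by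
  induction i with
  | zero => simp [heightOf, Finset.sum_range_succ]
  | succ i ih =>
    rw [heightOf_succ_fst, heightOf_succ_fst, ih (by omega)]
    linarith [vstep_add_hstep hμ hval hi hj]

lemma mvOfHeight_heightOf (hμ : IsMV μ) (hval : MiuraLocallyValid μ) :
    mvOfHeight m n (heightOf μ) = μ := by
  funext e
  cases e with
  | V i j hi hj =>
    rw [mvOfHeight_V, heightOf_succ_fst, vstep, dif_pos ⟨hi, hj⟩, add_sub_cancel_left,
      ← mul_assoc, ← mul_pow, neg_one_mul, neg_neg, one_pow, one_mul]
  | H i j hi hj =>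
    rw [mvOfHeight_H, heightOf_succ_snd hμ hval hi hj, hstep, dif_pos ⟨hi, hj⟩,
      add_sub_cancel_left]

lemma exists_isHeight_mvOfHeight_eq (hμ : IsMV μ) (hval : MiuraLocallyValid μ) :
    ∃ h : ℕ × ℕ → ℤ, IsHeight m n h ∧ h (0, 0) = 0 ∧ mvOfHeight m n h = μ := by
  have hmv := mvOfHeight_heightOf hμ hval
  exact ⟨heightOf μ, isHeight_iff_isMV.2 (by rwa [hmv]), by simp [heightOf], hmv⟩

lemma exists_eq_add_sub_two_mul_of_steps {f : ℕ → ℤ} {N : ℕ}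
    (hf : ∀ k < N, f (k + 1) - f k = 1 ∨ f (k + 1) - f k = -1) {k : ℕ} (hk : k ≤ N) :
    ∃ c ≤ k, f k = f 0 + k - 2 * c := by
  induction k with
  | zero => exact ⟨0, le_rfl, by simp⟩
  | succ k ih =>
    obtain ⟨c, hc, hfk⟩ := ih (by omega)
    rcases hf k (by omega) with h | h
    · exact ⟨c, by omega, by push_cast; omega⟩
    · exact ⟨c + 1, by omega, by push_cast; omega⟩

lemma IsHeight.exists_eq (hh : IsHeight m n h) (hp : p ∈ Faces m n) :
    ∃ c ≤ p.1 + p.2, h p = h (0, 0) + (p.1 + p.2 : ℕ) - 2 * c := by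
  obtain ⟨x, y⟩ := p
  obtain ⟨hx, hy⟩ := mem_faces.1 hp
  obtain ⟨c₁, hc₁, hrow⟩ := exists_eq_add_sub_two_mul_of_steps (f := fun k => h (0, k))
    (fun k hk => hh.step_snd (by omega) (by omega)) (le_refl y)
  obtain ⟨c₂, hc₂, hcol⟩ := exists_eq_add_sub_two_mul_of_steps (f := fun k => h (k, y))
    (fun k hk => hh.step_fst (by omega) hy) (le_refl x)
  exact ⟨c₁ + c₂, by omega, by simp only at hrow hcol ⊢; push_cast; omega⟩

lemma even_sub_of_isHeight (hh₁ : IsHeight m n h₁) (hh₂ : IsHeight m n h₂)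
    (h0 : h₁ (0, 0) = h₂ (0, 0)) (hp : p ∈ Faces m n) : Even (h₁ p - h₂ p) := by
  obtain ⟨c₁, -, hc₁⟩ := hh₁.exists_eq hp
  obtain ⟨c₂, -, hc₂⟩ := hh₂.exists_eq hp
  exact ⟨c₂ - c₁, by omega⟩

lemma abs_sub_le_of_isHeight (hh₁ : IsHeight m n h₁) (hh₂ : IsHeight m n h₂)
    (h0 : h₁ (0, 0) = h₂ (0, 0)) (hp : p ∈ Faces m n) :
    |h₁ p - h₂ p| ≤ 2 * (p.1 + p.2 : ℕ) := by
  obtain ⟨c₁, hc₁, he₁⟩ := hh₁.exists_eq hp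
  obtain ⟨c₂, hc₂, he₂⟩ := hh₂.exists_eq hp
  exact abs_le.2 ⟨by omega, by omega⟩

lemma sum_abs_sub_le_of_isHeight (hmn : m ≤ n) (hh₁ : IsHeight m n h₁)
    (hh₂ : IsHeight m n h₂) (h0 : h₁ (0, 0) = h₂ (0, 0)) :
    ∑ p ∈ Faces m n, |h₁ p - h₂ p| ≤ 2 * (2 * m * n ^ 2 : ℕ) :=
  calc ∑ p ∈ Faces m n, |h₁ p - h₂ p|
      ≤ ∑ _p ∈ Faces m n, (4 * n : ℤ) := Finset.sum_le_sum fun p hp => by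
        have := abs_sub_le_of_isHeight hh₁ hh₂ h0 hp
        have := mem_faces.1 hp
        omega
    _ = 2 * (2 * m * n ^ 2 : ℕ) := by simp [Faces]; ring

/-- Every face sharing a crease with `p` has height `h p - ε` (one of `faceA e`, `faceB e` is `p`
itself). -/
def IsPeak (m n : ℕ) (h : ℕ × ℕ → ℤ) (p : ℕ × ℕ) (ε : ℤ) : Prop :=
  ∀ e : Crease m n, Borders p e → h (faceA e) + h (faceB e) = 2 * h p - ε

lemma IsPeak.of_neg (hp : IsPeak m n (-h) p ε) : IsPeak m n h p (-ε) := by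
  intro e he
  have := hp e he
  simp only [Pi.neg_apply] at this
  omega

lemma faceFlip_mvOfHeight (hp : IsPeak m n h p ε) :
    faceFlip (mvOfHeight m n h) p = mvOfHeight m n (Function.update h p (h p - 2 * ε)) := by
  funext e
  have hAB := faceA_ne_faceB e
  unfold faceFlip
  split_ifs with he
  · have hsum := hp e he
    rcases borders_iff.1 he with rfl | rfl
    · simp only [mvOfHeight, Function.update_self, Function.update_of_ne hAB.symm]
      linear_combination (-2 * creaseSign e) * hsum
    · simp only [mvOfHeight, Function.update_self, Function.update_of_ne hAB]
      linear_combination (2 * creaseSign e) * hsum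
  · rw [borders_iff, not_or] at he
    simp only [mvOfHeight, Function.update_of_ne (Ne.symm he.1),
      Function.update_of_ne (Ne.symm he.2)]

lemma IsHeight.update_of_isPeak (hh : IsHeight m n h) (hp : IsPeak m n h p ε) :
    IsHeight m n (Function.update h p (h p - 2 * ε)) := by
  rw [isHeight_iff_isMV, ← faceFlip_mvOfHeight hp]
  exact (isHeight_iff_isMV.1 hh).faceFlip p

/-- A face maximising `2 h₁ - h₂` among those with `h₂ < h₁` is a peak of `h₁`: a neighbour `u`
with `h₁ u = h₁ p + 1` would also have `h₂ u < h₁ u` and a larger value of `2 h₁ - h₂`. -/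
lemma exists_isPeak_of_lt (hh₁ : IsHeight m n h₁) (hh₂ : IsHeight m n h₂)
    (hlt : ∃ p ∈ Faces m n, h₂ p < h₁ p) :
    ∃ p ∈ Faces m n, h₂ p < h₁ p ∧ IsPeak m n h₁ p 1 := by
  classical
  obtain ⟨p, hps, hmax⟩ := Finset.exists_max_image ((Faces m n).filter fun p => h₂ p < h₁ p)
    (fun p => 2 * h₁ p - h₂ p) (by simpa [Finset.Nonempty] using hlt)
  rw [Finset.mem_filter] at hps
  have below : ∀ u ∈ Faces m n, (h₁ u - h₁ p = 1 ∨ h₁ u - h₁ p = -1) →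
      (h₂ u - h₂ p = 1 ∨ h₂ u - h₂ p = -1) → h₁ u = h₁ p - 1 := by
    intro u hu hs₁ hs₂
    by_contra hne
    have := hmax u (Finset.mem_filter.2 ⟨hu, by omega⟩)
    omega
  refine ⟨p, hps.1, hps.2, fun e he => ?_⟩
  have hs₁ := hh₁ e
  have hs₂ := hh₂ e
  rcases borders_iff.1 he with rfl | rfl
  · have := below _ (faceB_mem_faces e) (by omega) (by omega)
    omega
  · have := below _ (faceA_mem_faces e) (by omega) (by omega)
    omega

lemma exists_isPeak_of_ne (hh₁ : IsHeight m n h₁) (hh₂ : IsHeight m n h₂)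
    (hne : ∃ p ∈ Faces m n, h₁ p ≠ h₂ p) :
    ∃ p ∈ Faces m n, ∃ ε : ℤ, (ε = 1 ∧ h₂ p < h₁ p ∨ ε = -1 ∧ h₁ p < h₂ p) ∧
      IsPeak m n h₁ p ε := by
  obtain ⟨p₀, hp₀, hne₀⟩ := hne
  rcases lt_or_gt_of_ne hne₀ with hlt | hlt
  · obtain ⟨p, hp, hlt, hpeak⟩ := exists_isPeak_of_lt hh₁.neg hh₂.neg ⟨p₀, hp₀, neg_lt_neg hlt⟩
    exact ⟨p, hp, -1, Or.inr ⟨rfl, neg_lt_neg_iff.1 hlt⟩, hpeak.of_neg⟩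
  · obtain ⟨p, hp, hlt, hpeak⟩ := exists_isPeak_of_lt hh₁ hh₂ ⟨p₀, hp₀, hlt⟩
    exact ⟨p, hp, 1, Or.inl ⟨rfl, hlt⟩, hpeak⟩

lemma sum_abs_sub_update {α : Type*} [DecidableEq α] {s : Finset α} {p : α} (hp : p ∈ s)
    (f g : α → ℤ) (a : ℤ) :
    ∑ q ∈ s, |Function.update f p a q - g q| + |f p - g p| =
      ∑ q ∈ s, |f q - g q| + |a - g p| := by
  have hrest : ∀ q ∈ s.erase p, |Function.update f p a q - g q| = |f q - g q| :=
    fun q hq => by rw [Function.update_of_ne (Finset.ne_of_mem_erase hq)]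
  rw [← Finset.add_sum_erase s _ hp, ← Finset.add_sum_erase s (fun q => |f q - g q|) hp,
    Finset.sum_congr rfl hrest, Function.update_self]
  ring

lemma abs_sub_two_mul_sub_add_two {a b ε : ℤ} (hab : Even (a - b))
    (hε : ε = 1 ∧ b < a ∨ ε = -1 ∧ a < b) : |a - 2 * ε - b| + 2 = |a - b| := by
  obtain ⟨r, hr⟩ := hab
  rcases hε with ⟨rfl, hlt⟩ | ⟨rfl, hlt⟩
  · rw [abs_of_nonneg (by omega), abs_of_pos (by omega)]; ring
  · rw [abs_of_nonpos (by omega), abs_of_neg (by omega)]; ring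

lemma even_update_sub {α : Type*} [DecidableEq α] {s : Finset α} {f g : α → ℤ} {p : α} {c : ℤ}
    (heven : ∀ q ∈ s, Even (f q - g q)) :
    ∀ q ∈ s, Even (Function.update f p (f p - 2 * c) q - g q) := by
  intro q hq
  rcases eq_or_ne q p with rfl | hqp
  · simpa [sub_right_comm] using (heven q hq).sub (even_two_mul c)
  · simpa [Function.update_of_ne hqp] using heven q hq

def IsFlipPath (P : (Crease m n → ℤ) → Prop) (μ ν : Crease m n → ℤ) (L : List (ℕ × ℕ)) :
    Prop :=
  (∀ F ∈ L, F ∈ Faces m n) ∧ flipSeq μ L = ν ∧ ∀ k ≤ L.length, P (flipSeq μ (L.take k))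

lemma IsFlipPath.nil {P : (Crease m n → ℤ) → Prop} (hμ : P μ) :
    IsFlipPath P μ μ [] :=
  ⟨by simp, rfl, fun k hk => by obtain rfl := Nat.le_zero.1 hk; exact hμ⟩

lemma IsFlipPath.cons {P : (Crease m n → ℤ) → Prop} {ν : Crease m n → ℤ} {F : ℕ × ℕ}
    {L : List (ℕ × ℕ)} (hF : F ∈ Faces m n) (hμ : P μ)
    (hL : IsFlipPath P (faceFlip μ F) ν L) : IsFlipPath P μ ν (F :: L) := by
  obtain ⟨hmem, hend, hvalid⟩ := hL
  refine ⟨by simpa [hF] using hmem, hend, fun k hk => ?_⟩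
  cases k with
  | zero => exact hμ
  | succ k => exact hvalid k (by simpa using hk)

lemma exists_isFlipPath_of_isHeight (hh₁ : IsHeight m n h₁) (hh₂ : IsHeight m n h₂)
    (heven : ∀ p ∈ Faces m n, Even (h₁ p - h₂ p)) {N : ℕ}
    (hN : ∑ p ∈ Faces m n, |h₁ p - h₂ p| ≤ 2 * N) :
    ∃ L, IsFlipPath (fun μ => IsMV μ ∧ MiuraLocallyValid μ)
      (mvOfHeight m n h₁) (mvOfHeight m n h₂) L ∧ L.length ≤ N := by
  induction N using Nat.strong_induction_on generalizing h₁ with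
  | _ N ih =>
  have hvalid₁ := And.intro (isHeight_iff_isMV.1 hh₁) (miuraLocallyValid_mvOfHeight hh₁)
  by_cases heq : ∀ p ∈ Faces m n, h₁ p = h₂ p
  · exact ⟨[], mvOfHeight_congr heq ▸ IsFlipPath.nil hvalid₁, Nat.zero_le N⟩
  push Not at heq
  obtain ⟨p, hp, ε, hε, hpeak⟩ := exists_isPeak_of_ne hh₁ hh₂ heq
  have hdrop := abs_sub_two_mul_sub_add_two (heven p hp) hε
  have hsum := sum_abs_sub_update hp h₁ h₂ (h₁ p - 2 * ε)
  have hnonneg := Finset.sum_nonneg fun q (_ : q ∈ Faces m n) =>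
    abs_nonneg (Function.update h₁ p (h₁ p - 2 * ε) q - h₂ q)
  have hN₁ : 1 ≤ N := by exact_mod_cast (show (1 : ℤ) ≤ N by linarith)
  obtain ⟨L, hL, hlen⟩ := ih (N - 1) (by omega) (hh₁.update_of_isPeak hpeak)
    (even_update_sub heven) (by push_cast [Nat.cast_sub hN₁]; linarith)
  exact ⟨p :: L, IsFlipPath.cons hp hvalid₁ (by rwa [faceFlip_mvOfHeight hpeak]),
    by simp only [List.length_cons]; omega⟩

end

theorem miura_flip_distance_bound_general (m n : ℕ) (hmn : m ≤ n)
    (μ₁ μ₂ : Crease m n → ℤ) (hmv₁ : IsMV μ₁) (hmv₂ : IsMV μ₂)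
    (hval₁ : MiuraLocallyValid μ₁) (hval₂ : MiuraLocallyValid μ₂) :
    ∃ L : List (ℕ × ℕ), (∀ F ∈ L, F ∈ Faces m n) ∧
      flipSeq μ₁ L = μ₂ ∧
      L.length ≤ 2 * m * n ^ 2 ∧
      ∀ k ≤ L.length,
        IsMV (flipSeq μ₁ (L.take k)) ∧ MiuraLocallyValid (flipSeq μ₁ (L.take k)) := by
  obtain ⟨h₁, hh₁, h₁0, rfl⟩ := exists_isHeight_mvOfHeight_eq hmv₁ hval₁
  obtain ⟨h₂, hh₂, h₂0, rfl⟩ := exists_isHeight_mvOfHeight_eq hmv₂ hval₂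
  have h0 : h₁ (0, 0) = h₂ (0, 0) := h₁0.trans h₂0.symm
  obtain ⟨L, ⟨hmem, hend, hvalid⟩, hlen⟩ := exists_isFlipPath_of_isHeight hh₁ hh₂
    (fun p hp => even_sub_of_isHeight hh₁ hh₂ h0 hp) (sum_abs_sub_le_of_isHeight hmn hh₁ hh₂ h0)
  exact ⟨L, hmem, hend, hlen, hvalid⟩

/-- For `1 ≤ m ≤ n`, any two Miura-locally-valid MV assignments of the `m × n`
Miura-ori are connected by a sequence of at most `2 m n²` single face flips, all of
whose intermediate MV assignments are Miura-locally-valid. -/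
theorem miura_flip_distance_bound (m n : ℕ) (hm : 1 ≤ m) (hmn : m ≤ n)
    (μ₁ μ₂ : Crease m n → ℤ) (hmv₁ : IsMV μ₁) (hmv₂ : IsMV μ₂)
    (hval₁ : MiuraLocallyValid μ₁) (hval₂ : MiuraLocallyValid μ₂) :
    ∃ L : List (ℕ × ℕ), (∀ F ∈ L, F ∈ Faces m n) ∧
      flipSeq μ₁ L = μ₂ ∧
      L.length ≤ 2 * m * n ^ 2 ∧
      ∀ k ≤ L.length,
        IsMV (flipSeq μ₁ (L.take k)) ∧ MiuraLocallyValid (flipSeq μ₁ (L.take k)) :=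
  miura_flip_distance_bound_general m n hmn μ₁ μ₂ hmv₁ hmv₂ hval₁ hval₂
end
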